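/- arXiv:2304.04538 — 8 statements merged into one kernel-verified Lean document; each statement's English description precedes it below -/
import Mathlib

section
/- Let r ≥ -1 be real, b ≥ 1, ν ∈ ℕ, n ≥ 1, c₁,…,cₙ ∈ ℂ, σ₁,…,σₙ ∈ ℝ pairwise distinct. If the function f(y) = y^r (log y)^ν Σ_{j=1}^n c_j y^{i σ_j} is Lebesgue integrable on (b, ∞), then c_j = 0 for all j. -/
/-!
On `(b, ∞)` with `y ≥ e`, the weight `y ^ r (log y) ^ ν` dominates `1 / y`, so integrability of
`f` forces integrability of `h (log y) / y`, where `h t = ∑ c_j e^{i σ_j t}`; the substitution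
`y = e^t` then makes `h` itself integrable on a half-line `(T, ∞)`. For a trigonometric polynomial
this forces every coefficient to vanish: multiplying by `e^{-i σ_k t}` and integrating over
`[T, X]` gives `c_k (X - T)` plus oscillatory terms bounded by `2 |c_j| / |σ_j - σ_k|`, while the
whole integral stays bounded by `∫_T^∞ |h|`.
-/

open MeasureTheory Set Finset Complex Filter

lemma eq_zero_of_forall_norm_mul_le {E : Type*} [NormedAddCommGroup E] {c : E} {K : ℝ}
    (h : ∀ x : ℝ, 0 ≤ x → ‖c‖ * x ≤ K) : c = 0 := by
  by_contra hc
  have hc' : 0 < ‖c‖ := norm_pos_iff.mpr hc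
  have := h ((|K| + 1) / ‖c‖) (by positivity)
  rw [mul_div_cancel₀ _ hc'.ne'] at this
  linarith [le_abs_self K]

lemma norm_intervalIntegral_le_setIntegral_Ioi_norm {E : Type*} [NormedAddCommGroup E]
    [NormedSpace ℝ E] {g : ℝ → E} {T X : ℝ} (hg : IntegrableOn g (Ioi T)) (hTX : T ≤ X) :
    ‖∫ t in T..X, g t‖ ≤ ∫ t in Ioi T, ‖g t‖ :=
  calc ‖∫ t in T..X, g t‖ ≤ ∫ t in Ioc T X, ‖g t‖ := by
        rw [intervalIntegral.integral_of_le hTX]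
        exact norm_integral_le_integral_norm _
    _ ≤ ∫ t in Ioi T, ‖g t‖ :=
        setIntegral_mono_set hg.norm (Eventually.of_forall fun _ => norm_nonneg _)
          Ioc_subset_Ioi_self.eventuallyLE

lemma norm_exp_I_mul_ofReal_mul_ofReal (σ t : ℝ) : ‖exp (I * σ * t)‖ = 1 := by
  rw [norm_exp]
  simp

lemma norm_intervalIntegral_exp_I_mul_le {σ : ℝ} (hσ : σ ≠ 0) (a b : ℝ) :
    ‖∫ t in a..b, exp (I * σ * t)‖ ≤ 2 / |σ| := by
  have hIσ : I * σ ≠ 0 := mul_ne_zero I_ne_zero (ofReal_ne_zero.mpr hσ)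
  rw [integral_exp_mul_complex hIσ, norm_div, norm_mul, norm_I, one_mul, norm_real,
    Real.norm_eq_abs]
  gcongr
  calc ‖exp (I * σ * b) - exp (I * σ * a)‖
      ≤ ‖exp (I * σ * b)‖ + ‖exp (I * σ * a)‖ := norm_sub_le _ _
    _ = 2 := by rw [norm_exp_I_mul_ofReal_mul_ofReal, norm_exp_I_mul_ofReal_mul_ofReal]; norm_num

section TrigonometricPolynomial

variable {ι : Type*} [Fintype ι] (c : ι → ℂ) (σ : ι → ℝ)

lemma trigPoly_mul_exp_neg (s t : ℝ) :
    (∑ j, c j * exp (I * σ j * t)) * exp (-(I * s * t)) =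
      ∑ j, c j * exp (I * ↑(σ j - s) * t) := by
  rw [Finset.sum_mul]
  refine Finset.sum_congr rfl fun j _ => ?_
  rw [mul_assoc, ← exp_add]
  push_cast
  ring_nf

lemma intervalIntegral_trigPoly_mul_exp_neg [DecidableEq ι] (k : ι) (a b : ℝ) :
    ∫ t in a..b, (∑ j, c j * exp (I * σ j * t)) * exp (-(I * σ k * t)) =
      c k * ↑(b - a) + ∑ j ∈ univ.erase k, c j * ∫ t in a..b, exp (I * ↑(σ j - σ k) * t) := by
  have hint : ∀ j, IntervalIntegrable (fun t : ℝ => exp (I * ↑(σ j - σ k) * t)) volume a b :=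
    fun j => (by fun_prop : Continuous _).intervalIntegrable a b
  simp_rw [trigPoly_mul_exp_neg]
  rw [intervalIntegral.integral_finsetSum fun j _ => (hint j).const_mul (c j)]
  simp_rw [intervalIntegral.integral_const_mul]
  rw [← Finset.add_sum_erase _ _ (mem_univ k)]
  simp

theorem trigPoly_coeff_eq_zero_of_integrableOn_Ioi (hσ : Function.Injective σ) {T : ℝ}
    (hint : IntegrableOn (fun t : ℝ => ∑ j, c j * exp (I * σ j * t)) (Ioi T)) (k : ι) :
    c k = 0 := by
  classical
  set g : ℝ → ℂ := fun t => (∑ j, c j * exp (I * σ j * t)) * exp (-(I * σ k * t))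
  have hnorm : ∀ t, ‖g t‖ = ‖∑ j, c j * exp (I * σ j * t)‖ := fun t => by
    rw [norm_mul, ← mul_neg, ← ofReal_neg, norm_exp_I_mul_ofReal_mul_ofReal, mul_one]
  have hg : IntegrableOn g (Ioi T) :=
    Integrable.congr' hint (by fun_prop : Continuous g).aestronglyMeasurable
      (Eventually.of_forall fun t => (hnorm t).symm)
  refine eq_zero_of_forall_norm_mul_le (K := (∫ t in Ioi T, ‖g t‖) +
    ∑ j ∈ univ.erase k, ‖c j‖ * (2 / |σ j - σ k|)) fun x hx => ?_
  have hsplit := intervalIntegral_trigPoly_mul_exp_neg c σ k T (T + x)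
  rw [add_sub_cancel_left] at hsplit
  calc ‖c k‖ * x = ‖c k * x‖ := by rw [norm_mul, norm_real, Real.norm_of_nonneg hx]
    _ ≤ ‖∫ t in T..T + x, g t‖ +
          ‖∑ j ∈ univ.erase k, c j * ∫ t in T..T + x, exp (I * ↑(σ j - σ k) * t)‖ := by
        rw [eq_sub_of_add_eq hsplit.symm]
        exact norm_sub_le _ _
    _ ≤ _ := by
        refine add_le_add (norm_intervalIntegral_le_setIntegral_Ioi_norm hg (by linarith))
          ((norm_sum_le _ _).trans (Finset.sum_le_sum fun j hj => ?_))
        have hjk : σ j - σ k ≠ 0 := sub_ne_zero.mpr (hσ.ne (Finset.ne_of_mem_erase hj))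
        rw [norm_mul]
        exact mul_le_mul_of_nonneg_left (norm_intervalIntegral_exp_I_mul_le hjk _ _)
          (norm_nonneg _)

end TrigonometricPolynomial

lemma inv_le_rpow_mul_log_pow {r : ℝ} (hr : -1 ≤ r) (ν : ℕ) {y : ℝ} (hy : Real.exp 1 ≤ y) :
    y⁻¹ ≤ y ^ r * Real.log y ^ ν := by
  have hy1 : 1 ≤ y := (Real.one_le_exp zero_le_one).trans hy
  have hlog : 1 ≤ Real.log y := (Real.le_log_iff_exp_le (by linarith)).mpr hy
  calc y⁻¹ = y ^ (-1 : ℝ) := (Real.rpow_neg_one y).symm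
    _ ≤ y ^ r := Real.rpow_le_rpow_of_exponent_le hy1 hr
    _ ≤ y ^ r * Real.log y ^ ν :=
        le_mul_of_one_le_right (by positivity) (one_le_pow₀ hlog)

lemma integrableOn_Ioi_of_integrableOn_rpow_mul_log_pow_mul_comp_log {r : ℝ} (hr : -1 ≤ r)
    (ν : ℕ) {g : ℝ → ℂ} (hg : Measurable g) {T : ℝ} (hT : 1 ≤ T)
    (hint : IntegrableOn (fun y : ℝ => ((y ^ r : ℝ) : ℂ) * ((Real.log y ^ ν : ℝ) : ℂ) *
      g (Real.log y)) (Ioi (Real.exp T))) :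
    IntegrableOn g (Ioi T) := by
  rw [← Real.log_exp T, ← integrableOn_comp_log_Ioi g (Real.exp_pos T)]
  have hmeas : Measurable fun y : ℝ => y⁻¹ • g (Real.log y) := by fun_prop
  refine Integrable.mono hint hmeas.aestronglyMeasurable
    ((ae_restrict_iff' measurableSet_Ioi).mpr (Eventually.of_forall fun y hy => ?_))
  have hy : Real.exp 1 ≤ y := (Real.exp_le_exp.mpr hT).trans (le_of_lt hy)
  have hy0 : 0 < y := (Real.exp_pos 1).trans_le hy
  rw [norm_smul, norm_mul, norm_mul, norm_real, norm_real, norm_inv, ← norm_mul,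
    Real.norm_of_nonneg hy0.le]
  gcongr
  exact (inv_le_rpow_mul_log_pow hr ν hy).trans (le_abs_self _)

theorem stmt1_general (n : ℕ) (r : ℝ) (hr : -1 ≤ r) (b : ℝ) (ν : ℕ)
    (c : Fin n → ℂ) (σ : Fin n → ℝ) (hσ : Function.Injective σ)
    (hint : MeasureTheory.IntegrableOn
      (fun y : ℝ => ((y ^ r : ℝ) : ℂ) * (((Real.log y) ^ ν : ℝ) : ℂ) *
        ∑ j, c j * Complex.exp (Complex.I * (σ j : ℂ) * (Real.log y : ℂ)))
      (Set.Ioi b)) :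
    ∀ j, c j = 0 := by
  set T := max 1 b
  have hbT : b < Real.exp T := calc
    b ≤ T := le_max_right 1 b
    _ < T + 1 := lt_add_one T
    _ ≤ Real.exp T := Real.add_one_le_exp T
  have hcont : Continuous fun t : ℝ => ∑ j, c j * exp (I * σ j * t) := by fun_prop
  exact trigPoly_coeff_eq_zero_of_integrableOn_Ioi c σ hσ
    (integrableOn_Ioi_of_integrableOn_rpow_mul_log_pow_mul_comp_log hr ν hcont.measurable
      (le_max_left 1 b) (hint.mono_set (Ioi_subset_Ioi hbT.le)))

/-- if `y^r (log y)^ν ∑ c_j y^{iσ_j}` is integrable on `(b,∞)` with pairwise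
distinct `σ_j`, then all `c_j` vanish. -/
theorem stmt1 (n : ℕ) (hn : 1 ≤ n) (r : ℝ) (hr : -1 ≤ r) (b : ℝ) (hb : 1 ≤ b) (ν : ℕ)
    (c : Fin n → ℂ) (σ : Fin n → ℝ) (hσ : Function.Injective σ)
    (hint : MeasureTheory.IntegrableOn
      (fun y : ℝ => ((y ^ r : ℝ) : ℂ) * (((Real.log y) ^ ν : ℝ) : ℂ) *
        ∑ j, c j * Complex.exp (Complex.I * (σ j : ℂ) * (Real.log y : ℂ)))
      (Set.Ioi b)) :
    ∀ j, c j = 0 :=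
  stmt1_general n r hr b ν c σ hσ hint
end

section
/- Let σ₁,…,σₙ be pairwise distinct real numbers and c₁,…,cₙ ∈ ℂ with c_j ≠ 0 and σ_j ≠ 0 for at least one j. Set E(y) = Σ_{j=1}^n c_j y^{i σ_j} for y > 0. Then there exist ε > 0 and a sequence (y_m) tending to +∞ such that |E(y_m)| ≥ ε for all m. -/
open Complex Filter Metric

private lemma norm_exp_I_mul_real (x : ℝ) (t : ℝ) :
    ‖Complex.exp (Complex.I * (x : ℂ) * (t : ℂ))‖ = 1 := by
  have : Complex.I * (x : ℂ) * (t : ℂ) = ((x * t : ℝ) : ℂ) * Complex.I := by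
    push_cast; ring
  rw [this]
  simpa using Complex.norm_exp_ofReal_mul_I (x * t)

/-- Recurrence: for every `δ > 0` and every `T`, there is `τ ≥ T` such that all
`exp (I σ_j τ)` are `δ`-close to `1`. -/
private lemma recur_aux {n : ℕ} (σ : Fin n → ℝ) {δ : ℝ} (hδ : 0 < δ) (T : ℝ) :
    ∃ τ : ℝ, T ≤ τ ∧ ∀ j, ‖Complex.exp (Complex.I * (σ j : ℂ) * (τ : ℂ)) - 1‖ < δ := by
  set g : ℕ → (Fin n → ℂ) := fun m j => Complex.exp (Complex.I * (σ j : ℂ) * (m : ℂ)) with hg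
  have hbdd : ∀ m, g m ∈ Metric.closedBall (0 : Fin n → ℂ) 1 := by
    intro m
    rw [mem_closedBall, dist_zero_right, pi_norm_le_iff_of_nonneg zero_le_one]
    intro j
    exact le_of_eq (norm_exp_I_mul_real (σ j) m)
  obtain ⟨a, -, φ, hφ, hconv⟩ := tendsto_subseq_of_bounded isBounded_closedBall hbdd
  have hcauchy : CauchySeq (g ∘ φ) := hconv.cauchySeq
  rw [Metric.cauchySeq_iff] at hcauchy
  obtain ⟨N, hN⟩ := hcauchy δ hδ
  obtain ⟨L, hL⟩ := exists_nat_ge (T + φ N)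
  set l : ℕ := max N L with hldef
  have hlN : N ≤ l := le_max_left _ _
  have hφl : (L : ℝ) ≤ φ l := by
    have h1 : L ≤ φ l := le_trans (le_max_right N L) (hφ.le_apply)
    exact_mod_cast h1
  have hTle : T + (φ N : ℝ) ≤ (φ l : ℝ) := le_trans hL hφl
  refine ⟨(φ l : ℝ) - (φ N : ℝ), by linarith, ?_⟩
  intro j
  have hd : dist (g (φ l)) (g (φ N)) < δ := hN l hlN N le_rfl
  have hdj : dist (g (φ l) j) (g (φ N) j) < δ :=
    lt_of_le_of_lt (dist_le_pi_dist _ _ j) hd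
  have hdj' : ‖Complex.exp (Complex.I * (σ j : ℂ) * ((φ l : ℕ) : ℂ)) -
      Complex.exp (Complex.I * (σ j : ℂ) * ((φ N : ℕ) : ℂ))‖ < δ := by
    simpa [hg, dist_eq_norm] using hdj
  have hfac : Complex.exp (Complex.I * (σ j : ℂ) * ((φ l : ℕ) : ℂ)) -
      Complex.exp (Complex.I * (σ j : ℂ) * ((φ N : ℕ) : ℂ)) =
      Complex.exp (Complex.I * (σ j : ℂ) * ((φ N : ℕ) : ℂ)) *
        (Complex.exp (Complex.I * (σ j : ℂ) * (((φ l : ℝ) - (φ N : ℝ) : ℝ) : ℂ)) - 1) := by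
    rw [mul_sub, mul_one, ← Complex.exp_add]
    congr 2
    push_cast
    ring
  have h1 : ‖Complex.exp (Complex.I * (σ j : ℂ) * ((φ N : ℕ) : ℂ))‖ = 1 := by
    have hcast : ((φ N : ℕ) : ℂ) = (((φ N : ℕ) : ℝ) : ℂ) := by push_cast; ring
    rw [hcast]
    exact norm_exp_I_mul_real _ _
  rw [hfac, norm_mul, h1, one_mul] at hdj'
  exact hdj'

/-- Nonvanishing: a nontrivial character sum is nonzero at some point. -/
private lemma exists_ne_zero {n : ℕ} (c : Fin n → ℂ) (σ : Fin n → ℝ)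
    (hσ : Function.Injective σ) (hex : ∃ j, c j ≠ 0) :
    ∃ t : ℝ, (∑ j, c j * Complex.exp (Complex.I * (σ j : ℂ) * (t : ℂ))) ≠ 0 := by
  obtain ⟨j0, hj0⟩ := hex
  by_contra h
  push_neg at h
  obtain ⟨B, hB⟩ := Finite.exists_le (fun j => |σ j|)
  have hB0 : 0 ≤ B := le_trans (abs_nonneg _) (hB j0)
  set s : ℝ := Real.pi / (B + 1) with hs
  have hspos : 0 < s := div_pos Real.pi_pos (by linarith)
  have hz : Function.Injective (fun j => Complex.exp (Complex.I * (σ j : ℂ) * (s : ℂ))) := by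
    intro j k hjk
    simp only [Complex.exp_eq_exp_iff_exists_int] at hjk
    obtain ⟨m, hm⟩ := hjk
    have him : σ j * s = σ k * s + m * (2 * Real.pi) := by
      have := congrArg Complex.im hm
      simpa [Complex.ext_iff, mul_comm] using this
    have hmz : m = 0 := by
      have h1 : |σ j * s - σ k * s| ≤ (|σ j| + |σ k|) * s := by
        rw [← sub_mul, abs_mul, abs_of_pos hspos]
        exact mul_le_mul_of_nonneg_right (abs_sub (σ j) (σ k)) hspos.le
      have h2 : (|σ j| + |σ k|) * s < 2 * Real.pi := by
        have hlt : |σ j| + |σ k| < 2 * (B + 1) := by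
          have := hB j; have := hB k; linarith
        calc (|σ j| + |σ k|) * s < 2 * (B + 1) * s :=
              mul_lt_mul_of_pos_right hlt hspos
          _ = 2 * Real.pi := by
              rw [hs]; field_simp
      have h3 : |(m : ℝ)| * (2 * Real.pi) < 2 * Real.pi := by
        have heq : σ j * s - σ k * s = m * (2 * Real.pi) := by linarith
        calc |(m : ℝ)| * (2 * Real.pi) = |σ j * s - σ k * s| := by
              rw [heq, abs_mul, abs_of_pos (by positivity : (0:ℝ) < 2 * Real.pi)]
          _ ≤ (|σ j| + |σ k|) * s := h1
          _ < 2 * Real.pi := h2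
      have hm1 : |(m : ℝ)| < 1 := by
        have h2π : (0:ℝ) < 2 * Real.pi := by positivity
        by_contra hcon
        push_neg at hcon
        nlinarith
      have hm1' : |m| < 1 := by exact_mod_cast hm1
      exact Int.abs_lt_one_iff.mp hm1'
    have heq : σ j * s = σ k * s := by rw [him, hmz]; simp
    exact hσ (mul_right_cancel₀ (ne_of_gt hspos) heq)
  have hc : c = 0 := by
    apply Matrix.eq_zero_of_forall_pow_sum_mul_pow_eq_zero hz
    intro i
    have hi := h ((i : ℕ) * s)
    rw [← hi]
    apply Finset.sum_congr rfl
    intro j _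
    congr 1
    rw [← Complex.exp_nat_mul]
    congr 1
    push_cast
    ring
  exact hj0 (by rw [hc]; rfl)

/-- a nontrivial sum of imaginary powers stays bounded away from `0` along
a sequence tending to `+∞`. -/
theorem stmt2 (n : ℕ) (hn : 1 ≤ n) (c : Fin n → ℂ) (σ : Fin n → ℝ)
    (hσ : Function.Injective σ) (hex : ∃ j, c j ≠ 0 ∧ σ j ≠ 0) :
    ∃ ε > (0 : ℝ), ∃ y : ℕ → ℝ, Filter.Tendsto y Filter.atTop Filter.atTop ∧
      ∀ m, ε ≤ ‖∑ j, c j * Complex.exp (Complex.I * (σ j : ℂ) * (Real.log (y m) : ℂ))‖ := by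
  obtain ⟨j0, hc0, -⟩ := hex
  obtain ⟨t0, ht0⟩ := exists_ne_zero c σ hσ ⟨j0, hc0⟩
  set f : ℝ → ℂ := fun t => ∑ j, c j * Complex.exp (Complex.I * (σ j : ℂ) * (t : ℂ)) with hf
  set ε : ℝ := ‖f t0‖ / 2 with hε
  have hεpos : 0 < ε := by
    have : 0 < ‖f t0‖ := norm_pos_iff.mpr ht0
    positivity
  set C : ℝ := ∑ j, ‖c j‖ with hC
  have hCpos : 0 < C := by
    rw [hC]
    apply Finset.sum_pos'
    · intro j _; exact norm_nonneg _
    · exact ⟨j0, Finset.mem_univ _, norm_pos_iff.mpr hc0⟩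
  set δ : ℝ := ε / C with hδdef
  have hδpos : 0 < δ := div_pos hεpos hCpos
  have key : ∀ m : ℕ, ∃ τ : ℝ, (m : ℝ) - t0 ≤ τ ∧
      ∀ j, ‖Complex.exp (Complex.I * (σ j : ℂ) * (τ : ℂ)) - 1‖ < δ :=
    fun m => recur_aux σ hδpos ((m : ℝ) - t0)
  choose τ hτ1 hτ2 using key
  refine ⟨ε, hεpos, fun m => Real.exp (t0 + τ m), ?_, ?_⟩
  · apply Real.tendsto_exp_atTop.comp
    apply tendsto_atTop_mono (fun m => ?_) tendsto_natCast_atTop_atTop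
    linarith [hτ1 m]
  · intro m
    have hlog : Real.log (Real.exp (t0 + τ m)) = t0 + τ m := Real.log_exp _
    rw [hlog]
    have hsplit : (∑ j, c j * Complex.exp (Complex.I * (σ j : ℂ) * ((t0 + τ m : ℝ) : ℂ)))
        - f t0 = ∑ j, (c j * Complex.exp (Complex.I * (σ j : ℂ) * ((t0 : ℝ) : ℂ))) *
          (Complex.exp (Complex.I * (σ j : ℂ) * ((τ m : ℝ) : ℂ)) - 1) := by
      rw [hf, ← Finset.sum_sub_distrib]
      apply Finset.sum_congr rfl
      intro j _
      have hexp : Complex.exp (Complex.I * (σ j : ℂ) * ((t0 + τ m : ℝ) : ℂ)) =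
          Complex.exp (Complex.I * (σ j : ℂ) * ((t0 : ℝ) : ℂ)) *
          Complex.exp (Complex.I * (σ j : ℂ) * ((τ m : ℝ) : ℂ)) := by
        rw [← Complex.exp_add]
        congr 1
        push_cast
        ring
      rw [hexp]
      ring
    have hbound : ‖(∑ j, c j * Complex.exp (Complex.I * (σ j : ℂ) * ((t0 + τ m : ℝ) : ℂ)))
        - f t0‖ ≤ C * δ := by
      rw [hsplit]
      calc ‖∑ j, (c j * Complex.exp (Complex.I * (σ j : ℂ) * ((t0 : ℝ) : ℂ))) *
            (Complex.exp (Complex.I * (σ j : ℂ) * ((τ m : ℝ) : ℂ)) - 1)‖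
          ≤ ∑ j, ‖(c j * Complex.exp (Complex.I * (σ j : ℂ) * ((t0 : ℝ) : ℂ))) *
            (Complex.exp (Complex.I * (σ j : ℂ) * ((τ m : ℝ) : ℂ)) - 1)‖ :=
            norm_sum_le _ _
        _ ≤ ∑ j, ‖c j‖ * δ := by
            apply Finset.sum_le_sum
            intro j _
            rw [norm_mul, norm_mul, norm_exp_I_mul_real, mul_one]
            exact mul_le_mul_of_nonneg_left (hτ2 m j).le (norm_nonneg _)
        _ = C * δ := by rw [hC, ← Finset.sum_mul]
    have hCδ : C * δ = ε := by
      rw [hδdef]; field_simp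
    have hrev := norm_sub_norm_le (f t0)
      (∑ j, c j * Complex.exp (Complex.I * (σ j : ℂ) * ((t0 + τ m : ℝ) : ℂ)))
    have hft0 : ‖f t0‖ = 2 * ε := by rw [hε]; ring
    have hsym : ‖f t0 - (∑ j, c j * Complex.exp (Complex.I * (σ j : ℂ) * ((t0 + τ m : ℝ) : ℂ)))‖
        = ‖(∑ j, c j * Complex.exp (Complex.I * (σ j : ℂ) * ((t0 + τ m : ℝ) : ℂ))) - f t0‖ :=
      norm_sub_rev _ _
    linarith [hrev, hCδ ▸ hbound]
end

section
/- Let σ ∈ ℝ and p be a real polynomial with p(0) = 0, p not identically zero, and write a_d ≠ 0 for the leading coefficient of p, d = deg p ≥ 1. Then there exists T₀ ≥ 1 such that the integrals J(T) = ∫_{T₀}^{T} exp(2πi(σt + p(e^t))) dt are bounded uniformly in T ≥ T₀. -/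
/-!
Write φ(t) = σt + p(eᵗ). Then φ'(t) = σ + q₁(eᵗ) and φ''(t) = q₂(eᵗ) with q₁ = X·p' and
q₂ = X·q₁', and the Euler operator q ↦ X·q' keeps the degree d and multiplies the leading
coefficient by d. So if a_d > 0, eventually φ' > 0 and φ'' ≥ 0 (if a_d < 0, conjugate). On such a
range van der Corput's first-derivative test applies: integrating by parts against 1/(2πiφ'),
whose derivative has constant sign and hence telescoping total variation, gives
‖∫_a^b e^{2πiφ}‖ ≤ 1/(πφ'(a)).
-/

open Polynomial Filter Real Set intervalIntegral
open Complex (I)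
open scoped Interval Complex ComplexConjugate

theorem integral_deriv_div_sq_eq {f f' : ℝ → ℝ} {a b : ℝ}
    (hf : ∀ t ∈ [[a, b]], HasDerivAt f (f' t) t) (hf₀ : ∀ t ∈ [[a, b]], f t ≠ 0)
    (hint : IntervalIntegrable (fun t => f' t / f t ^ 2) MeasureTheory.volume a b) :
    ∫ t in a..b, f' t / f t ^ 2 = (f a)⁻¹ - (f b)⁻¹ := by
  have hderiv : ∀ t ∈ [[a, b]], HasDerivAt (fun t => -(f t)⁻¹) (f' t / f t ^ 2) t := fun t ht => by
    have h := ((hf t ht).inv (hf₀ t ht)).neg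
    rwa [neg_div, neg_neg] at h
  rw [integral_eq_sub_of_hasDerivAt hderiv hint]
  ring

theorem integral_cexp_mul_eq_by_parts {φ φ' φ'' : ℝ → ℝ} {a b : ℝ} {c : ℂ} (hc : c ≠ 0)
    (hφ : ∀ t ∈ [[a, b]], HasDerivAt φ (φ' t) t) (hφ' : ∀ t ∈ [[a, b]], HasDerivAt φ' (φ'' t) t)
    (hφ''_cont : ContinuousOn φ'' [[a, b]]) (hφ'_ne : ∀ t ∈ [[a, b]], φ' t ≠ 0) :
    ∫ t in a..b, cexp (c * φ t) =
      (c * φ' b)⁻¹ * cexp (c * φ b) - (c * φ' a)⁻¹ * cexp (c * φ a) -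
        ∫ t in a..b, -(c * φ'' t) / (c * φ' t) ^ 2 * cexp (c * φ t) := by
  have hφ_cont : ContinuousOn φ [[a, b]] := fun t ht =>
    (hφ t ht).continuousAt.continuousWithinAt
  have hφ'_cont : ContinuousOn φ' [[a, b]] := fun t ht =>
    (hφ' t ht).continuousAt.continuousWithinAt
  have hcφ' : ∀ t ∈ [[a, b]], c * φ' t ≠ 0 := fun t ht =>
    mul_ne_zero hc (Complex.ofReal_ne_zero.mpr (hφ'_ne t ht))
  have hv : ∀ t ∈ [[a, b]], HasDerivAt (fun t => cexp (c * φ t)) (c * φ' t * cexp (c * φ t)) t :=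
    fun t ht => by simpa [mul_comm] using (((hφ t ht).ofReal_comp).const_mul c).cexp
  have hu : ∀ t ∈ [[a, b]],
      HasDerivAt (fun t => (c * φ' t)⁻¹) (-(c * φ'' t) / (c * φ' t) ^ 2) t := fun t ht =>
    (((hφ' t ht).ofReal_comp).const_mul c).inv (hcφ' t ht)
  have hu'_cont : ContinuousOn (fun t => -(c * φ'' t) / (c * φ' t) ^ 2) [[a, b]] :=
    ContinuousOn.div (by fun_prop) (by fun_prop) fun t ht => pow_ne_zero 2 (hcφ' t ht)
  have hv'_cont : ContinuousOn (fun t => c * φ' t * cexp (c * φ t)) [[a, b]] := by fun_prop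
  rw [← integral_mul_deriv_eq_deriv_mul hu hv hu'_cont.intervalIntegrable
    hv'_cont.intervalIntegrable]
  exact integral_congr fun t ht => (inv_mul_cancel_left₀ (hcφ' t ht) _).symm

theorem norm_integral_cexp_le_of_deriv_pos_of_deriv2_nonneg {φ φ' φ'' : ℝ → ℝ} {a b : ℝ}
    (hab : a ≤ b) (hφ : ∀ t ∈ Icc a b, HasDerivAt φ (φ' t) t)
    (hφ' : ∀ t ∈ Icc a b, HasDerivAt φ' (φ'' t) t) (hφ''_cont : ContinuousOn φ'' (Icc a b))
    (hφ'_pos : ∀ t ∈ Icc a b, 0 < φ' t) (hφ''_nonneg : ∀ t ∈ Icc a b, 0 ≤ φ'' t) :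
    ‖∫ t in a..b, cexp (2 * π * I * φ t)‖ ≤ (π * φ' a)⁻¹ := by
  rw [← uIcc_of_le hab] at hφ hφ' hφ''_cont hφ'_pos hφ''_nonneg
  set c : ℂ := 2 * π * I
  have hc : c ≠ 0 := by simp [c, pi_ne_zero]
  have hφ'_ne : ∀ t ∈ [[a, b]], φ' t ≠ 0 := fun t ht => (hφ'_pos t ht).ne'
  have hnorm_c : ∀ x : ℝ, 0 ≤ x → ‖c * x‖ = 2 * π * x := fun x hx => by
    simp [c, abs_of_pos pi_pos, abs_of_nonneg hx]
  have hnorm_exp : ∀ t, ‖cexp (c * φ t)‖ = 1 := fun t => by simp [c, Complex.norm_exp]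
  have hnorm_u : ∀ t ∈ [[a, b]], ‖(c * φ' t)⁻¹ * cexp (c * φ t)‖ = (2 * π * φ' t)⁻¹ :=
      fun t ht => by
    rw [norm_mul, hnorm_exp, mul_one, norm_inv, hnorm_c _ (hφ'_pos t ht).le]
  have hnorm_u' : ∀ t ∈ [[a, b]], ‖-(c * φ'' t) / (c * φ' t) ^ 2 * cexp (c * φ t)‖ =
      (2 * π)⁻¹ * (φ'' t / φ' t ^ 2) := fun t ht => by
    rw [norm_mul, hnorm_exp, mul_one, norm_div, norm_neg, norm_pow, hnorm_c _ (hφ'_pos t ht).le,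
      hnorm_c _ (hφ''_nonneg t ht)]
    field_simp
  have hrem : ∫ t in a..b, ‖-(c * φ'' t) / (c * φ' t) ^ 2 * cexp (c * φ t)‖
      = (2 * π)⁻¹ * ((φ' a)⁻¹ - (φ' b)⁻¹) := by
    have hφ'_cont : ContinuousOn φ' [[a, b]] := fun t ht =>
      (hφ' t ht).continuousAt.continuousWithinAt
    have hint : IntervalIntegrable (fun t => φ'' t / φ' t ^ 2) MeasureTheory.volume a b :=
      (hφ''_cont.div (hφ'_cont.pow 2) fun t ht => pow_ne_zero 2 (hφ'_ne t ht)).intervalIntegrable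
    rw [integral_congr hnorm_u', integral_const_mul, integral_deriv_div_sq_eq hφ' hφ'_ne hint]
  calc ‖∫ t in a..b, cexp (c * φ t)‖
      = ‖(c * φ' b)⁻¹ * cexp (c * φ b) - (c * φ' a)⁻¹ * cexp (c * φ a) -
          ∫ t in a..b, -(c * φ'' t) / (c * φ' t) ^ 2 * cexp (c * φ t)‖ := by
        rw [integral_cexp_mul_eq_by_parts hc hφ hφ' hφ''_cont hφ'_ne]
    _ ≤ ‖(c * φ' b)⁻¹ * cexp (c * φ b)‖ + ‖(c * φ' a)⁻¹ * cexp (c * φ a)‖ +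
          ∫ t in a..b, ‖-(c * φ'' t) / (c * φ' t) ^ 2 * cexp (c * φ t)‖ :=
      (norm_sub_le _ _).trans (add_le_add (norm_sub_le _ _) (norm_integral_le_integral_norm hab))
    _ = (2 * π * φ' b)⁻¹ + (2 * π * φ' a)⁻¹ + (2 * π)⁻¹ * ((φ' a)⁻¹ - (φ' b)⁻¹) := by
      rw [hnorm_u b right_mem_uIcc, hnorm_u a left_mem_uIcc, hrem]
    _ = (π * φ' a)⁻¹ := by
      have := hφ'_ne a left_mem_uIcc
      have := hφ'_ne b right_mem_uIcc
      field_simp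
      ring

theorem eventually_norm_integral_cexp_le {φ φ' φ'' : ℝ → ℝ}
    (hφ : ∀ t, HasDerivAt φ (φ' t) t) (hφ' : ∀ t, HasDerivAt φ' (φ'' t) t)
    (hφ''_cont : Continuous φ'') (hφ'_pos : ∀ᶠ t in atTop, 0 < φ' t)
    (hφ''_nonneg : ∀ᶠ t in atTop, 0 ≤ φ'' t) :
    ∀ᶠ a in atTop, ∀ b, a ≤ b → ‖∫ t in a..b, cexp (2 * π * I * φ t)‖ ≤ (π * φ' a)⁻¹ := by
  obtain ⟨N, hN⟩ := eventually_atTop.mp (hφ'_pos.and hφ''_nonneg)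
  filter_upwards [eventually_ge_atTop N] with a ha b hab
  exact norm_integral_cexp_le_of_deriv_pos_of_deriv2_nonneg hab (fun t _ => hφ t)
    (fun t _ => hφ' t) hφ''_cont.continuousOn (fun t ht => (hN t (ha.trans ht.1)).1)
    (fun t ht => (hN t (ha.trans ht.1)).2)

theorem norm_integral_cexp_neg (φ : ℝ → ℝ) (a b : ℝ) :
    ‖∫ t in a..b, cexp (2 * π * I * ((-φ t : ℝ) : ℂ))‖ =
      ‖∫ t in a..b, cexp (2 * π * I * φ t)‖ := by
  have hconj (t : ℝ) :
      cexp (2 * π * I * ((-φ t : ℝ) : ℂ)) = conj (cexp (2 * π * I * φ t)) := by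
    rw [← Complex.exp_conj]
    simp [map_ofNat]
  simp_rw [hconj, intervalIntegral_conj, RCLike.norm_conj]

namespace Polynomial

theorem natDegree_X_mul_derivative {R : Type*} [Semiring R] [Nontrivial R] [IsAddTorsionFree R]
    (q : R[X]) : (X * derivative q).natDegree = q.natDegree := by
  rcases eq_or_ne q.natDegree 0 with hq | hq
  · simp [derivative_eq_zero.mpr hq, hq]
  · rw [natDegree_X_mul (derivative_ne_zero.mpr hq), natDegree_derivative]
    omega

theorem hasDerivAt_eval_exp (q : ℝ[X]) (t : ℝ) :
    HasDerivAt (fun t => q.eval (exp t)) ((X * derivative q).eval (exp t)) t := by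
  rw [eval_mul, eval_X, mul_comm]
  exact (q.hasDerivAt (exp t)).comp t (hasDerivAt_exp t)

theorem tendsto_eval_exp_atTop {q : ℝ[X]} (hq : 0 < q.natDegree) (hlc : 0 < q.leadingCoeff) :
    Tendsto (fun t => q.eval (exp t)) atTop atTop :=
  (q.tendsto_atTop_of_leadingCoeff_nonneg (natDegree_pos_iff_degree_pos.mp hq) hlc.le).comp
    tendsto_exp_atTop

end Polynomial

theorem eventually_norm_integral_cexp_poly_exp_le (σ : ℝ) {p : ℝ[X]} (hd : 1 ≤ p.natDegree)
    (hlc : 0 < p.leadingCoeff) :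
    ∀ᶠ a in atTop, ∃ C, ∀ b, a ≤ b →
      ‖∫ t in a..b, cexp (2 * π * I * ((σ * t + p.eval (exp t) : ℝ) : ℂ))‖ ≤ C := by
  set q₁ := X * derivative p
  set q₂ := X * derivative q₁
  have hq₁ : q₁.natDegree = p.natDegree := natDegree_X_mul_derivative p
  have hd₀ : (0 : ℝ) < p.natDegree := by exact_mod_cast hd
  have hlc₁ : 0 < q₁.leadingCoeff := by simpa [q₁] using mul_pos hlc hd₀
  have hlc₂ : 0 < q₂.leadingCoeff := by simpa [q₂, hq₁] using mul_pos hlc₁ hd₀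
  have hφ (t : ℝ) : HasDerivAt (fun t => σ * t + p.eval (exp t)) (σ + q₁.eval (exp t)) t := by
    have h := ((hasDerivAt_id' t).const_mul σ).add (hasDerivAt_eval_exp p t)
    rwa [mul_one] at h
  have hφ' (t : ℝ) : HasDerivAt (fun t => σ + q₁.eval (exp t)) (q₂.eval (exp t)) t :=
    (hasDerivAt_eval_exp q₁ t).const_add σ
  have hφ'_pos : ∀ᶠ t in atTop, 0 < σ + q₁.eval (exp t) :=
    (tendsto_atTop_add_const_left _ σ
      (tendsto_eval_exp_atTop (by omega) hlc₁)).eventually_gt_atTop 0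
  have hφ''_nonneg : ∀ᶠ t in atTop, 0 ≤ q₂.eval (exp t) :=
    (tendsto_eval_exp_atTop (by rw [natDegree_X_mul_derivative, hq₁]; omega)
      hlc₂).eventually_ge_atTop 0
  filter_upwards [eventually_norm_integral_cexp_le hφ hφ' (by fun_prop) hφ'_pos hφ''_nonneg]
    with a ha using ⟨_, ha⟩

theorem stmt3_general (σ : ℝ) (p : Polynomial ℝ) (hd : 1 ≤ p.natDegree) :
    ∃ T₀ : ℝ, 1 ≤ T₀ ∧ ∃ C : ℝ, ∀ T : ℝ, T₀ ≤ T →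
      ‖∫ t in T₀..T,
          Complex.exp (2 * Real.pi * Complex.I * ((σ * t + p.eval (Real.exp t) : ℝ) : ℂ))‖ ≤ C := by
  have hbound : ∀ᶠ T₀ in atTop, ∃ C : ℝ, ∀ T : ℝ, T₀ ≤ T →
      ‖∫ t in T₀..T, cexp (2 * π * I * ((σ * t + p.eval (exp t) : ℝ) : ℂ))‖ ≤ C := by
    rcases (leadingCoeff_ne_zero.mpr (ne_zero_of_natDegree_gt hd)).lt_or_gt with hneg | hpos
    · have hd' : 1 ≤ (-p).natDegree := by rwa [natDegree_neg]
      have hneg' : 0 < (-p).leadingCoeff := by rwa [leadingCoeff_neg, neg_pos]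
      filter_upwards [eventually_norm_integral_cexp_poly_exp_le (-σ) hd' hneg'] with a ⟨C, hC⟩
      refine ⟨C, fun b hab => ?_⟩
      have hphase (t : ℝ) : -σ * t + (-p).eval (exp t) = -(σ * t + p.eval (exp t)) := by
        rw [eval_neg]; ring
      simpa only [hphase, norm_integral_cexp_neg] using hC b hab
    · exact eventually_norm_integral_cexp_poly_exp_le σ hd hpos
  obtain ⟨T₀, ⟨C, hC⟩, hT₀⟩ := (hbound.and (eventually_ge_atTop 1)).exists
  exact ⟨T₀, hT₀, C, hC⟩

/-- boundedness of the oscillatory integrals `∫_{T₀}^{T} e^{2πi(σt+p(e^t))} dt`. -/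
theorem stmt3 (σ : ℝ) (p : Polynomial ℝ) (h0 : p.coeff 0 = 0) (hp : p ≠ 0)
    (hd : 1 ≤ p.natDegree) :
    ∃ T₀ : ℝ, 1 ≤ T₀ ∧ ∃ C : ℝ, ∀ T : ℝ, T₀ ≤ T →
      ‖∫ t in T₀..T,
          Complex.exp (2 * Real.pi * Complex.I * ((σ * t + p.eval (Real.exp t) : ℝ) : ℂ))‖ ≤ C :=
  stmt3_general σ p hd
end

section
/- Let X be a set, a, b : X → ℝ functions with 1 ≤ a(x) ≤ 2 ≤ b(x) for all x ∈ X, and let f(x,y) = a(x)b(x)/(a(x)b(x) − y) for 0 < y < a(x) (and 0 otherwise). Then for every s ∈ ℂ with Re(s) > 0 and every x ∈ X, the Mellin transform ∫_0^∞ y^{s−1} f(x,y) dy converges and equals a(x)^s · Σ_{k≥0} b(x)^{−k}/(s+k), where the series converges absolutely. -/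
/-!
On `0 < y < a` the kernel `ab / (ab - y)` is the geometric series `∑ (y / ab)ᵏ`, whose ratio is at
most `1 / b ≤ 1 / 2`. The series `∑ (a / ab)ᵏ y^(Re s - 1)` dominates it termwise and is integrable
on `(0, a)`, so the Mellin integral may be taken term by term, and
`∫₀ᵃ y^(s-1) (y / ab)ᵏ dy = aˢ b⁻ᵏ / (s + k)`.
-/

open MeasureTheory Set

section
variable {A C : ℝ} {s : ℂ}

theorem hasSum_geometric_ofReal_div {y : ℝ} (hy : |y| < C) :
    HasSum (fun k : ℕ => ((y : ℂ) / C) ^ k) ((C / (C - y) : ℝ) : ℂ) := by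
  have hC : 0 < C := (abs_nonneg y).trans_lt hy
  have hr : ‖(y : ℂ) / C‖ < 1 := by
    rw [norm_div, Complex.norm_real, Complex.norm_real, Real.norm_eq_abs, Real.norm_of_nonneg hC.le,
      div_lt_one hC]
    exact hy
  have hsum : (1 - (y : ℂ) / C)⁻¹ = ((C / (C - y) : ℝ) : ℂ) := by
    push_cast
    rw [one_sub_div (by exact_mod_cast hC.ne'), inv_div]
  exact hsum ▸ hasSum_geometric_of_norm_lt_one hr

theorem norm_cpow_mul_div_pow_le {y : ℝ} (hy : y ∈ Ioc 0 A) (hC : 0 < C) (k : ℕ) :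
    ‖(y : ℂ) ^ (s - 1) * ((y : ℂ) / C) ^ k‖ ≤ (A / C) ^ k * y ^ (s.re - 1) := by
  rw [norm_mul, norm_pow, norm_div, Complex.norm_cpow_eq_rpow_re_of_pos hy.1, Complex.norm_real,
    Complex.norm_real, Real.norm_of_nonneg hy.1.le, Real.norm_of_nonneg hC.le, mul_comm]
  simp only [Complex.sub_re, Complex.one_re]
  gcongr
  exacts [Real.rpow_nonneg hy.1.le _, div_nonneg hy.1.le hC.le, hy.2]

theorem integral_Ioo_cpow_mul_div_pow (hA : 0 < A) (hs : 0 < s.re) (k : ℕ) :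
    ∫ y in Ioo 0 A, (y : ℂ) ^ (s - 1) * ((y : ℂ) / C) ^ k
      = A ^ s * ((A / C : ℂ) ^ k / (s + k)) := by
  have hsk : s + k ≠ 0 := fun h => by
    have := congrArg Complex.re h
    simp only [Complex.add_re, Complex.natCast_re, Complex.zero_re] at this
    linarith [k.cast_nonneg (α := ℝ)]
  have hA' : (A : ℂ) ≠ 0 := by exact_mod_cast hA.ne'
  have hre : -1 < (s - 1 + k).re := by
    simp only [Complex.add_re, Complex.sub_re, Complex.one_re, Complex.natCast_re]
    linarith [k.cast_nonneg (α := ℝ)]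
  have hintegrand : EqOn (fun y : ℝ => (y : ℂ) ^ (s - 1) * ((y : ℂ) / C) ^ k)
      (fun y => (C : ℂ)⁻¹ ^ k * (y : ℂ) ^ (s - 1 + k)) (Ioo 0 A) := fun y hy => by
    simp only
    rw [Complex.cpow_add _ _ (by exact_mod_cast hy.1.ne'), Complex.cpow_natCast]
    ring
  calc ∫ y in Ioo 0 A, (y : ℂ) ^ (s - 1) * ((y : ℂ) / C) ^ k
      = (C : ℂ)⁻¹ ^ k * ∫ y in (0)..A, (y : ℂ) ^ (s - 1 + k) := by
        rw [setIntegral_congr_fun measurableSet_Ioo hintegrand, integral_const_mul,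
          intervalIntegral.integral_of_le hA.le, integral_Ioc_eq_integral_Ioo]
    _ = A ^ s * ((A / C : ℂ) ^ k / (s + k)) := by
        rw [integral_cpow (.inl hre), show s - 1 + k + 1 = s + k by ring, Complex.ofReal_zero,
          Complex.zero_cpow hsk, sub_zero, Complex.cpow_add _ _ hA', Complex.cpow_natCast]
        ring

theorem integrableOn_Ioo_cpow_mul_div_sub (hA : 0 < A) (hAC : A < C) (hs : 0 < s.re) :
    IntegrableOn (fun y : ℝ => (y : ℂ) ^ (s - 1) * ((C / (C - y) : ℝ) : ℂ)) (Ioo 0 A) := by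
  have hcpow : IntegrableOn (fun y : ℝ => (y : ℂ) ^ (s - 1)) (Icc 0 A) :=
    (integrableOn_Icc_iff_integrableOn_Ioo).2 <|
      (intervalIntegral.integrableOn_Ioo_cpow_iff hA).2 (by simpa using hs)
  have hkernel : ContinuousOn (fun y : ℝ => ((C / (C - y) : ℝ) : ℂ)) (Icc 0 A) :=
    Complex.continuous_ofReal.comp_continuousOn <|
      continuousOn_const.div (by fun_prop) fun y hy => (sub_pos.2 (hy.2.trans_lt hAC)).ne'
  exact (hcpow.mul_continuousOn hkernel isCompact_Icc).mono_set Ioo_subset_Icc_self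

theorem integral_Ioo_cpow_mul_div_sub (hA : 0 < A) (hAC : A < C) (hs : 0 < s.re) :
    ∫ y in Ioo 0 A, (y : ℂ) ^ (s - 1) * ((C / (C - y) : ℝ) : ℂ)
      = A ^ s * ∑' k : ℕ, (A / C : ℂ) ^ k / (s + k) := by
  have hC : 0 < C := hA.trans hAC
  have hAC' : A / C < 1 := (div_lt_one hC).2 hAC
  have hseries := hasSum_integral_of_dominated_convergence
    (μ := volume.restrict (Ioo 0 A))
    (F := fun (k : ℕ) (y : ℝ) => (y : ℂ) ^ (s - 1) * ((y : ℂ) / C) ^ k)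
    (fun k y => (A / C) ^ k * y ^ (s.re - 1))
    (fun k => by fun_prop)
    (fun k => (ae_restrict_mem measurableSet_Ioo).mono fun y hy =>
      norm_cpow_mul_div_pow_le (Ioo_subset_Ioc_self hy) hC k)
    (ae_of_all _ fun y => (summable_geometric_of_lt_one (by positivity) hAC').mul_right _)
    (by
      simp_rw [tsum_mul_right]
      exact ((intervalIntegral.integrableOn_Ioo_rpow_iff hA).2 (by linarith)).const_mul _)
    ((ae_restrict_mem measurableSet_Ioo).mono fun y hy =>
      (hasSum_geometric_ofReal_div (by rw [abs_of_pos hy.1]; exact hy.2.trans hAC)).mul_left _)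
  simp_rw [integral_Ioo_cpow_mul_div_pow hA hs] at hseries
  rw [← hseries.tsum_eq, tsum_mul_left]

theorem summable_norm_pow_div_add_natCast {w : ℂ} (hw : ‖w‖ < 1) (hs : 0 < s.re) :
    Summable fun k : ℕ => ‖w ^ k / (s + k)‖ := by
  refine .of_nonneg_of_le (fun k => norm_nonneg _) (fun k => ?_)
    ((summable_geometric_of_lt_one (norm_nonneg w) hw).div_const s.re)
  have hsk : s.re ≤ ‖s + k‖ :=
    (le_add_of_nonneg_right k.cast_nonneg).trans (by simpa using (s + k).re_le_norm)
  rw [norm_div, norm_pow]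
  gcongr

end

/-- the Mellin transform of `f(x,y) = a(x)b(x)/(a(x)b(x)−y)` on `0<y<a(x)`
converges for `Re s > 0` and equals `a(x)^s ∑_{k≥0} b(x)^{−k}/(s+k)`. -/
theorem stmt6 {X : Type*} (a b : X → ℝ) (hab : ∀ x, 1 ≤ a x ∧ a x ≤ 2 ∧ 2 ≤ b x)
    (s : ℂ) (hs : 0 < s.re) (x : X) :
    IntegrableOn
      (fun y : ℝ => (y : ℂ) ^ (s - 1) *
        (if 0 < y ∧ y < a x then (((a x * b x) / (a x * b x - y) : ℝ) : ℂ) else 0))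
      (Set.Ioi 0) ∧
    Summable (fun k : ℕ => ‖((b x : ℂ))⁻¹ ^ k / (s + k)‖) ∧
    (∫ y in Set.Ioi (0 : ℝ), (y : ℂ) ^ (s - 1) *
        (if 0 < y ∧ y < a x then (((a x * b x) / (a x * b x - y) : ℝ) : ℂ) else 0))
      = (a x : ℂ) ^ s * ∑' k : ℕ, ((b x : ℂ))⁻¹ ^ k / (s + k) := by
  obtain ⟨ha, -, hb⟩ := hab x
  have hA : 0 < a x := by linarith
  have hAC : a x < a x * b x := by nlinarith
  have hw : (a x / (a x * b x : ℝ) : ℂ) = (b x : ℂ)⁻¹ := by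
    have : (a x : ℂ) ≠ 0 := by exact_mod_cast hA.ne'
    push_cast
    field_simp
  have hind : (fun y : ℝ => (y : ℂ) ^ (s - 1) *
        (if 0 < y ∧ y < a x then (((a x * b x) / (a x * b x - y) : ℝ) : ℂ) else 0)) =
      (Ioo 0 (a x)).indicator
        fun y => (y : ℂ) ^ (s - 1) * (((a x * b x) / (a x * b x - y) : ℝ) : ℂ) := by
    ext y
    simp only [indicator, mem_Ioo, mul_ite, mul_zero]
  have hnorm : ‖(b x : ℂ)⁻¹‖ < 1 := by
    rw [norm_inv, Complex.norm_real, Real.norm_of_nonneg (by linarith)]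
    exact inv_lt_one_of_one_lt₀ (by linarith)
  rw [hind, integrableOn_indicator_iff measurableSet_Ioo, setIntegral_indicator measurableSet_Ioo,
    inter_eq_right.2 Ioo_subset_Ioi_self, inter_eq_left.2 Ioo_subset_Ioi_self,
    integral_Ioo_cpow_mul_div_sub hA hAC hs, hw]
  exact ⟨integrableOn_Ioo_cpow_mul_div_sub hA hAC hs,
    summable_norm_pow_div_add_natCast hnorm hs, rfl⟩
end

section
/- Let X be a set, a, b : X → ℝ with 1 ≤ a(x) ≤ 2 ≤ b(x) for all x ∈ X. For s ∈ ℂ with Re(s) < 1 and x ∈ X, the integral ∫_{a(x)}^{∞} y^{s−2} (1 + a(x)/(b(x)y))^s dy converges absolutely and equals −a(x)^{s−1} Σ_{k≥0} binom(s,k) b(x)^{−k}/(s−1−k), where binom(s,k) = s(s−1)⋯(s−k+1)/k! is the generalized binomial coefficient, and the series converges absolutely. -/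
/-!
For `y > A` the point `u = A / (B y)` lies in `[0, 1 / B)`, so the binomial series expands the
integrand as `∑ₖ binom(s,k) (A / B)ᵏ y^(s-2-k)`. Since `|u| ≤ 1 / B < 1`, the `k`-th term is
dominated by `‖binom(s,k)‖ B⁻ᵏ y^(Re s - 2)`, which is summable in `k` and integrable on
`(A, ∞)` because `Re s < 1`; dominated convergence then lets us integrate term by term, and
`∫_A^∞ y^(s-2-k) dy = -A^(s-1-k) / (s-1-k)`.
-/

open MeasureTheory Set

noncomputable def cbinom (s : ℂ) (k : ℕ) : ℂ :=
  (∏ i ∈ Finset.range k, (s - i)) / (k.factorial : ℂ)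

theorem cbinom_eq_choose (s : ℂ) (k : ℕ) : cbinom s k = Ring.choose s k := by
  rw [cbinom, Ring.choose_eq_smul, ← Polynomial.aeval_eq_smeval, Polynomial.aeval_def,
    ← Polynomial.eval_map, descPochhammer_map, descPochhammer_eval_eq_prod_range, smul_eq_mul,
    div_eq_inv_mul]

theorem hasSum_cbinom_mul_pow (s : ℂ) {u : ℂ} (hu : ‖u‖ < 1) :
    HasSum (fun k => cbinom s k * u ^ k) ((1 + u) ^ s) := by
  have hu' : u ∈ Metric.eball (0 : ℂ) 1 := by
    rw [Metric.mem_eball, edist_zero_right, ← ofReal_norm, ← ENNReal.ofReal_one]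
    exact (ENNReal.ofReal_lt_ofReal_iff one_pos).mpr hu
  simpa [binomialSeries, FormalMultilinearSeries.ofScalars_apply_eq, cbinom_eq_choose,
    mul_comm] using (Complex.one_add_cpow_hasFPowerSeriesOnBall_zero (a := s)).hasSum hu'

theorem summable_norm_cbinom_mul_pow (s : ℂ) {r : ℝ} (hr0 : 0 ≤ r) (hr : r < 1) :
    Summable fun k => ‖cbinom s k‖ * r ^ k := by
  lift r to NNReal using hr0
  have h := (binomialSeries ℂ s).summable_norm_mul_pow (r := r)
    (lt_of_lt_of_le (by exact_mod_cast hr) binomialSeries_radius_ge_one)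
  simpa [binomialSeries, FormalMultilinearSeries.ofScalars_norm, cbinom_eq_choose] using h

theorem summable_norm_cbinom_mul_inv_pow (s : ℂ) {B : ℝ} (hB : 1 < B) :
    Summable fun k => ‖cbinom s k‖ * B⁻¹ ^ k :=
  summable_norm_cbinom_mul_pow s (by positivity) (inv_lt_one_of_one_lt₀ hB)

theorem one_sub_re_le_norm_sub_one_sub_natCast (s : ℂ) (k : ℕ) :
    1 - s.re ≤ ‖s - 1 - k‖ := by
  have hre : (s - 1 - k).re = s.re - 1 - k := by simp
  calc 1 - s.re ≤ -(s - 1 - k).re := by rw [hre]; linarith [k.cast_nonneg (α := ℝ)]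
    _ ≤ ‖s - 1 - k‖ := (neg_le_abs _).trans (Complex.abs_re_le_norm _)

theorem summable_norm_cbinom_mul_inv_pow_div {s : ℂ} (hs : s.re < 1) {B : ℝ} (hB : 1 < B) :
    Summable fun k : ℕ => ‖cbinom s k * (B : ℂ)⁻¹ ^ k / (s - 1 - k)‖ := by
  refine .of_nonneg_of_le (fun k => norm_nonneg _) (fun k => ?_)
    ((summable_norm_cbinom_mul_inv_pow s hB).div_const (1 - s.re))
  rw [norm_div, norm_mul, norm_pow, norm_inv, Complex.norm_real,
    Real.norm_of_nonneg (by linarith)]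
  exact div_le_div_of_nonneg_left (by positivity) (by linarith)
    (one_sub_re_le_norm_sub_one_sub_natCast s k)

section IntegralIoi

variable {s : ℂ} {A B : ℝ}

theorem hasSum_cbinom_mul_div_pow_mul_cpow (hA : 0 ≤ A) (hB : 1 < B) {y : ℝ} (hy : A < y) :
    HasSum (fun k => cbinom s k * ((A / (B * y) : ℝ) : ℂ) ^ k * (y : ℂ) ^ (s - 2))
      ((y : ℂ) ^ (s - 2) * ((1 + A / (B * y) : ℝ) : ℂ) ^ s) := by
  have hy0 : 0 < y := hA.trans_lt hy
  have hu : ‖((A / (B * y) : ℝ) : ℂ)‖ < 1 := by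
    have hBy : y < B * y := lt_mul_left hy0 hB
    rw [Complex.norm_real, Real.norm_of_nonneg (by positivity), div_lt_one (by positivity)]
    linarith
  rw [mul_comm ((y : ℂ) ^ (s - 2)), Complex.ofReal_add, Complex.ofReal_one]
  exact (hasSum_cbinom_mul_pow s hu).mul_right _

theorem norm_cbinom_mul_div_pow_mul_cpow_le (hA : 0 ≤ A) (hB : 0 < B) {y : ℝ} (hy : A < y)
    (k : ℕ) :
    ‖cbinom s k * ((A / (B * y) : ℝ) : ℂ) ^ k * (y : ℂ) ^ (s - 2)‖
      ≤ ‖cbinom s k‖ * B⁻¹ ^ k * y ^ (s.re - 2) := by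
  have hy0 : 0 < y := hA.trans_lt hy
  have hu : A / (B * y) ≤ B⁻¹ := by
    rw [div_le_iff₀ (by positivity)]
    calc A ≤ y := hy.le
      _ = B⁻¹ * (B * y) := by field_simp
  rw [norm_mul, norm_mul, norm_pow, Complex.norm_real, Real.norm_of_nonneg (by positivity),
    Complex.norm_cpow_eq_rpow_re_of_pos hy0, Complex.sub_re, Complex.re_ofNat]
  gcongr

theorem integral_Ioi_cbinom_mul_div_pow_mul_cpow (hA : 0 < A) (hs : s.re < 1) (k : ℕ) :
    ∫ y in Ioi A, cbinom s k * ((A / (B * y) : ℝ) : ℂ) ^ k * (y : ℂ) ^ (s - 2)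
      = -(A : ℂ) ^ (s - 1) * (cbinom s k * (B : ℂ)⁻¹ ^ k / (s - 1 - k)) := by
  have hAc : (A : ℂ) ≠ 0 := Complex.ofReal_ne_zero.mpr hA.ne'
  have hre : (s - 2 - k).re < -1 := by simp; linarith [k.cast_nonneg (α := ℝ)]
  have hsk : s - 1 - k ≠ 0 := fun h => by
    have := one_sub_re_le_norm_sub_one_sub_natCast s k
    rw [h, norm_zero] at this
    linarith
  have hterm :
      EqOn (fun y : ℝ => cbinom s k * ((A / (B * y) : ℝ) : ℂ) ^ k * (y : ℂ) ^ (s - 2))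
      (fun y : ℝ => cbinom s k * (A * (B : ℂ)⁻¹) ^ k * (y : ℂ) ^ (s - 2 - k)) (Ioi A) := by
    intro y hy
    have hyc : (y : ℂ) ≠ 0 := Complex.ofReal_ne_zero.mpr (hA.trans hy).ne'
    simp only [Complex.cpow_sub _ _ hyc, Complex.cpow_natCast]
    push_cast
    simp only [div_pow, mul_pow, inv_pow]
    field_simp
  rw [setIntegral_congr_fun measurableSet_Ioi hterm, integral_const_mul,
    integral_Ioi_cpow_of_lt hre hA, show s - 2 - k + 1 = s - 1 - k by ring,
    Complex.cpow_sub _ _ hAc, Complex.cpow_natCast]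
  simp only [mul_pow, inv_pow]
  field_simp

theorem integrableOn_Ioi_cpow_mul_one_add_cpow (hA : 0 < A) (hB : 1 < B) (hs : s.re < 1) :
    IntegrableOn (fun y : ℝ => (y : ℂ) ^ (s - 2) * ((1 + A / (B * y) : ℝ) : ℂ) ^ s)
      (Ioi A) := by
  have hc := summable_norm_cbinom_mul_inv_pow s hB
  refine Integrable.mono'
    ((integrableOn_Ioi_rpow_of_lt (a := s.re - 2) (by linarith) hA).const_mul
      (∑' k, ‖cbinom s k‖ * B⁻¹ ^ k))
    (by fun_prop : Measurable _).aestronglyMeasurable ?_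
  filter_upwards [ae_restrict_mem measurableSet_Ioi] with y hy
  exact (hasSum_cbinom_mul_div_pow_mul_cpow hA.le hB hy).norm_le_of_bounded
    (hc.hasSum.mul_right _) (norm_cbinom_mul_div_pow_mul_cpow_le hA.le (by linarith) hy)

theorem hasSum_integral_Ioi_cpow_mul_one_add_cpow (hA : 0 < A) (hB : 1 < B) (hs : s.re < 1) :
    HasSum (fun k : ℕ => -(A : ℂ) ^ (s - 1) * (cbinom s k * (B : ℂ)⁻¹ ^ k / (s - 1 - k)))
      (∫ y in Ioi A, (y : ℂ) ^ (s - 2) * ((1 + A / (B * y) : ℝ) : ℂ) ^ s) := by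
  have hc := summable_norm_cbinom_mul_inv_pow s hB
  have key := hasSum_integral_of_dominated_convergence (μ := volume.restrict (Ioi A))
    (F := fun k y => cbinom s k * ((A / (B * y) : ℝ) : ℂ) ^ k * (y : ℂ) ^ (s - 2))
    (fun k y => ‖cbinom s k‖ * B⁻¹ ^ k * y ^ (s.re - 2))
    (fun k => (by fun_prop : Measurable _).aestronglyMeasurable)
    (fun k => (ae_restrict_mem measurableSet_Ioi).mono fun y hy =>
      norm_cbinom_mul_div_pow_mul_cpow_le hA.le (by linarith) hy k)
    (.of_forall fun y => hc.mul_right _)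
    (by simpa only [tsum_mul_right] using
      (integrableOn_Ioi_rpow_of_lt (a := s.re - 2) (by linarith) hA).const_mul
          (∑' k, ‖cbinom s k‖ * B⁻¹ ^ k))
    ((ae_restrict_mem measurableSet_Ioi).mono fun y hy =>
      hasSum_cbinom_mul_div_pow_mul_cpow hA.le hB hy)
  simpa only [integral_Ioi_cbinom_mul_div_pow_mul_cpow hA hs] using key

end IntegralIoi

/-- for `Re s < 1`, `∫_{a(x)}^∞ y^{s−2}(1+a(x)/(b(x)y))^s dy
= −a(x)^{s−1} ∑_k binom(s,k) b(x)^{−k}/(s−1−k)`. -/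
theorem stmt7 {X : Type*} (a b : X → ℝ) (hab : ∀ x, 1 ≤ a x ∧ a x ≤ 2 ∧ 2 ≤ b x)
    (s : ℂ) (hs : s.re < 1) (x : X) :
    IntegrableOn
      (fun y : ℝ => (y : ℂ) ^ (s - 2) * (((1 + a x / (b x * y) : ℝ)) : ℂ) ^ s)
      (Set.Ioi (a x)) ∧
    Summable (fun k : ℕ => ‖cbinom s k * ((b x : ℂ))⁻¹ ^ k / (s - 1 - k)‖) ∧
    (∫ y in Set.Ioi (a x), (y : ℂ) ^ (s - 2) * (((1 + a x / (b x * y) : ℝ)) : ℂ) ^ s)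
      = -(a x : ℂ) ^ (s - 1) * ∑' k : ℕ, cbinom s k * ((b x : ℂ))⁻¹ ^ k / (s - 1 - k) := by
  obtain ⟨ha, -, hb⟩ := hab x
  have hA : 0 < a x := by linarith
  have hB : 1 < b x := by linarith
  refine ⟨integrableOn_Ioi_cpow_mul_one_add_cpow hA hB hs,
    summable_norm_cbinom_mul_inv_pow_div hs hB, ?_⟩
  rw [← (hasSum_integral_Ioi_cpow_mul_one_add_cpow hA hB hs).tsum_eq, tsum_mul_left]
end

section
/- Let ℓ ∈ ℂ, η ∈ ℂ, d ≥ 1, μ ∈ ℕ, a : X → ℝ with a(x) ≥ 1, and let ξ_k : X → ℂ (k ∈ ℕ) be functions with Σ_k sup_{x} |ξ_k(x)| < ∞. Fix s ∈ ℂ with Re(ℓs + η) + d < 0 and where ℓs + η + d − k ≠ 0 for all k ∈ ℕ. Then the function y ↦ y^{(ℓs+η)/d}(log y)^μ Σ_k ξ_k(x)(a(x)/y)^{k/d} is integrable on (a(x), ∞) for every x, and its integral equals −a(x)^{(ℓs+η+d)/d} Σ_{i=0}^{μ} c_{μ,i} (log a(x))^i Σ_k ξ_k(x)/(ℓs+η+d−k)^{μ+1−i},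 with c_{μ,i} = (−1)^{μ−i}(μ!/i!)d^{μ+1−i}. -/
/-!
Writing `(a/y)^(k/d) = a^(k/d) y^(-k/d)`, the integrand becomes a series of terms
`ξ_k a^(k/d) y^(w - k/d) (log y)^μ` with `w = (ℓs+η)/d`, each dominated by
`‖ξ_k‖ ‖y^w (log y)^μ‖`; since `Re w < -1` the norms of their integrals are summable and the series
can be integrated termwise. For `Re w < -1` the function `y^w (log y)^n` has the primitive
`y^(w+1) Σ_i c_i (log y)^i` vanishing at infinity, with
`c_i = (-1)^(n-i) n!/i! / (w+1)^(n+1-i)`: differentiating, the contributions of neighbouring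
indices cancel and only `(log y)^n` survives.
-/

open MeasureTheory Filter Set Asymptotics Topology

lemma isLittleO_cpow_mul_log_pow_atTop {w : ℂ} {p : ℝ} (hwp : w.re < p) (n : ℕ) :
    (fun y : ℝ => (y : ℂ) ^ w * (Real.log y : ℂ) ^ n) =o[atTop] fun y => y ^ p := by
  have hlog : (fun y : ℝ => Real.log y ^ n) =o[atTop] fun y => y ^ (p - w.re) := by
    simpa only [Real.rpow_natCast] using isLittleO_log_rpow_rpow_atTop (n : ℝ) (sub_pos.2 hwp)
  rw [← isLittleO_norm_left]
  refine ((isBigO_refl (fun y : ℝ => y ^ w.re) atTop).mul_isLittleO hlog).congr' ?_ ?_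
  all_goals filter_upwards [eventually_ge_atTop 1] with y hy
  · rw [norm_mul, norm_pow, Complex.norm_cpow_eq_rpow_re_of_pos (by linarith),
      Complex.norm_of_nonneg (Real.log_nonneg hy)]
  · rw [← Real.rpow_add (by linarith), add_sub_cancel]

lemma continuousOn_cpow_mul_log_pow (w : ℂ) (n : ℕ) :
    ContinuousOn (fun y : ℝ => (y : ℂ) ^ w * (Real.log y : ℂ) ^ n) (Ioi 0) := by
  intro y (hy : 0 < y)
  refine ContinuousAt.continuousWithinAt (ContinuousAt.mul ?_ ?_)
  · exact Complex.continuousAt_ofReal_cpow_const _ _ (Or.inr hy.ne')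
  · exact (Complex.continuous_ofReal.continuousAt.comp (Real.continuousAt_log hy.ne')).pow n

lemma integrableOn_Ioi_cpow_mul_log_pow {A : ℝ} (hA : 0 < A) {w : ℂ} (hw : w.re < -1) (n : ℕ) :
    IntegrableOn (fun y : ℝ => (y : ℂ) ^ w * (Real.log y : ℂ) ^ n) (Ioi A) := by
  have hloc := ((continuousOn_cpow_mul_log_pow w n).mono fun y (hy : A ≤ y) =>
    hA.trans_le hy).locallyIntegrableOn (μ := volume) measurableSet_Ici
  have hdecay : IntegrableAtFilter (fun y : ℝ => y ^ ((w.re - 1) / 2)) atTop :=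
    ⟨Ioi 1, Ioi_mem_atTop 1, integrableOn_Ioi_rpow_of_lt (by linarith) one_pos⟩
  exact (hloc.integrableOn_of_isBigO_atTop
    (isLittleO_cpow_mul_log_pow_atTop (by linarith) n).isBigO hdecay).mono_set Ioi_subset_Ici_self

lemma tendsto_cpow_mul_log_pow_atTop {w : ℂ} (hw : w.re < 0) (n : ℕ) :
    Tendsto (fun y : ℝ => (y : ℂ) ^ w * (Real.log y : ℂ) ^ n) atTop (𝓝 0) := by
  have h := isLittleO_cpow_mul_log_pow_atTop hw n
  simp only [Real.rpow_zero] at h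
  exact (isLittleO_one_iff ℝ).mp h

noncomputable def logPowCoeff (v : ℂ) (n i : ℕ) : ℂ :=
  (-1) ^ (n - i) * ((n.factorial : ℂ) / (i.factorial : ℂ)) / v ^ (n + 1 - i)

section LogPowCoeff

variable {v : ℂ} {n : ℕ}

lemma logPowCoeff_succ_mul (hv : v ≠ 0) {i : ℕ} (hi : i < n) :
    logPowCoeff v n (i + 1) * (i + 1 : ℕ) = -(v * logPowCoeff v n i) := by
  obtain ⟨j, rfl⟩ : ∃ j, n = i + 1 + j := ⟨n - (i + 1), by omega⟩
  have e₁ : i + 1 + j - (i + 1) = j := by omega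
  have e₂ : i + 1 + j + 1 - (i + 1) = j + 1 := by omega
  have e₃ : i + 1 + j - i = j + 1 := by omega
  have e₄ : i + 1 + j + 1 - i = j + 2 := by omega
  simp only [logPowCoeff, e₁, e₂, e₃, e₄, Nat.factorial_succ]
  push_cast
  field_simp
  ring

lemma mul_logPowCoeff_self (hv : v ≠ 0) : v * logPowCoeff v n n = 1 := by
  simp only [logPowCoeff, Nat.sub_self, Nat.add_sub_cancel_left, pow_zero, pow_one, one_mul]
  field_simp
  exact div_self (Nat.cast_ne_zero.2 n.factorial_ne_zero)

lemma mul_sum_logPowCoeff_add_sum_logPowCoeff (hv : v ≠ 0) (L : ℂ) :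
    v * ∑ i ∈ Finset.range (n + 1), logPowCoeff v n i * L ^ i +
      ∑ i ∈ Finset.range (n + 1), logPowCoeff v n i * (i * L ^ (i - 1)) = L ^ n := by
  have hcancel : ∀ i ∈ Finset.range n, v * (logPowCoeff v n i * L ^ i) +
      logPowCoeff v n (i + 1) * ((i + 1 : ℕ) * L ^ (i + 1 - 1)) = 0 := by
    intro i hi
    rw [Nat.add_sub_cancel, ← mul_assoc (logPowCoeff v n (i + 1)),
      logPowCoeff_succ_mul hv (Finset.mem_range.1 hi)]
    ring
  rw [Finset.sum_range_succ' (fun i => logPowCoeff v n i * (i * L ^ (i - 1))), Finset.mul_sum,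
    Finset.sum_range_succ, add_add_add_comm, ← Finset.sum_add_distrib, Finset.sum_eq_zero hcancel,
    ← mul_assoc, mul_logPowCoeff_self hv]
  simp

end LogPowCoeff

noncomputable def cpowLogPowPrimitive (w : ℂ) (n : ℕ) (y : ℝ) : ℂ :=
  (y : ℂ) ^ (w + 1) * ∑ i ∈ Finset.range (n + 1), logPowCoeff (w + 1) n i * (Real.log y : ℂ) ^ i

section CpowLogPowPrimitive

variable {w : ℂ} {n : ℕ}

lemma hasDerivAt_cpowLogPowPrimitive (hw : w ≠ -1) {y : ℝ} (hy : 0 < y) :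
    HasDerivAt (cpowLogPowPrimitive w n) ((y : ℂ) ^ w * (Real.log y : ℂ) ^ n) y := by
  have hv : w + 1 ≠ 0 := fun h => hw (eq_neg_of_add_eq_zero_left h)
  have hlog : HasDerivAt (fun t : ℝ => (Real.log t : ℂ)) ((y : ℂ)⁻¹) y := by
    simpa using (Real.hasDerivAt_log hy.ne').ofReal_comp
  have hsum := HasDerivAt.fun_sum fun i (_ : i ∈ Finset.range (n + 1)) =>
    ((hasDerivAt_pow i _).comp y hlog).const_mul (logPowCoeff (w + 1) n i)
  refine ((hasDerivAt_ofReal_cpow_const hy.ne' hv).mul hsum).congr_deriv ?_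
  have hy' : (y : ℂ) ≠ 0 := by exact_mod_cast hy.ne'
  rw [add_sub_cancel_right, Complex.cpow_add _ _ hy', Complex.cpow_one,
    ← mul_sum_logPowCoeff_add_sum_logPowCoeff hv (Real.log y : ℂ)]
  simp only [mul_add, Finset.mul_sum, Function.comp_apply]
  congr 1 <;> refine Finset.sum_congr rfl fun i _ => ?_ <;> field_simp

lemma tendsto_cpowLogPowPrimitive_atTop (hw : w.re < -1) :
    Tendsto (cpowLogPowPrimitive w n) atTop (𝓝 0) := by
  have hre : (w + 1).re < 0 := by simp only [Complex.add_re, Complex.one_re]; linarith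
  have h := tendsto_finsetSum (Finset.range (n + 1)) fun i _ =>
    (tendsto_cpow_mul_log_pow_atTop hre i).const_mul (logPowCoeff (w + 1) n i)
  simp only [mul_zero, Finset.sum_const_zero] at h
  refine h.congr fun y => ?_
  simp only [cpowLogPowPrimitive, Finset.mul_sum]
  exact Finset.sum_congr rfl fun i _ => by ring

theorem integral_Ioi_cpow_mul_log_pow {A : ℝ} (hA : 0 < A) (hw : w.re < -1) :
    ∫ y in Ioi A, (y : ℂ) ^ w * (Real.log y : ℂ) ^ n = -cpowLogPowPrimitive w n A := by
  have hw' : w ≠ -1 := by rintro rfl; norm_num at hw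
  rw [integral_Ioi_of_hasDerivAt_of_tendsto'
    (fun y hy => hasDerivAt_cpowLogPowPrimitive hw' (hA.trans_le hy))
    (integrableOn_Ioi_cpow_mul_log_pow hA hw n) (tendsto_cpowLogPowPrimitive_atTop hw), zero_sub]

end CpowLogPowPrimitive

section TermwiseIntegration

variable {A : ℝ} {w : ℂ} {β ξ : ℕ → ℂ}

lemma norm_mul_ofReal_div_cpow_le {y : ℝ} (hA : 0 < A) (hAy : A ≤ y) {b : ℂ} (hb : 0 ≤ b.re)
    (z : ℂ) : ‖z * ((A / y : ℝ) : ℂ) ^ b‖ ≤ ‖z‖ := by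
  have hq : 0 < A / y := div_pos hA (hA.trans_le hAy)
  rw [norm_mul, Complex.norm_cpow_eq_rpow_re_of_pos hq]
  exact mul_le_of_le_one_right (norm_nonneg z)
    (Real.rpow_le_one hq.le ((div_le_one (hA.trans_le hAy)).2 hAy) hb)

lemma integrableOn_Ioi_cpow_mul_log_pow_mul_tsum (hA : 0 < A) (hw : w.re < -1) (n : ℕ)
    (hβ : ∀ k, 0 ≤ (β k).re) (hξ : Summable fun k => ‖ξ k‖) :
    IntegrableOn (fun y : ℝ => (y : ℂ) ^ w * (Real.log y : ℂ) ^ n *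
      ∑' k, ξ k * ((A / y : ℝ) : ℂ) ^ β k) (Ioi A) := by
  have hbound : ∀ k, ∀ y ∈ Ioi A, ‖ξ k * ((A / y : ℝ) : ℂ) ^ β k‖ ≤ ‖ξ k‖ := fun k y hy =>
    norm_mul_ofReal_div_cpow_le hA hy.le (hβ k) (ξ k)
  have hcont : ContinuousOn (fun y : ℝ => ∑' k, ξ k * ((A / y : ℝ) : ℂ) ^ β k) (Ioi A) := by
    refine continuousOn_tsum (fun k y hy => ?_) hξ hbound
    have hy : 0 < y := hA.trans hy
    refine (continuousAt_const.mul ?_).continuousWithinAt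
    exact (Complex.continuousAt_ofReal_cpow_const _ _ (Or.inr (div_pos hA hy).ne')).comp
      (continuousAt_const.div continuousAt_id hy.ne')
  have hg := (continuousOn_cpow_mul_log_pow w n).mono fun y (hy : A < y) => hA.trans hy
  refine Integrable.mono'
    ((integrableOn_Ioi_cpow_mul_log_pow hA hw n).norm.mul_const (∑' k, ‖ξ k‖))
    ((hg.mul hcont).aestronglyMeasurable measurableSet_Ioi) ?_
  filter_upwards [ae_restrict_mem measurableSet_Ioi] with y hy
  rw [norm_mul]
  exact mul_le_mul_of_nonneg_left (tsum_of_norm_bounded hξ.hasSum fun k => hbound k y hy)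
    (norm_nonneg _)

theorem integral_Ioi_cpow_mul_log_pow_mul_tsum (hA : 0 < A) (hw : w.re < -1) (n : ℕ)
    (hβ : ∀ k, 0 ≤ (β k).re) (hξ : Summable fun k => ‖ξ k‖) :
    ∫ y in Ioi A, (y : ℂ) ^ w * (Real.log y : ℂ) ^ n * ∑' k, ξ k * ((A / y : ℝ) : ℂ) ^ β k =
      ∑' k, ξ k * (A : ℂ) ^ β k * ∫ y in Ioi A, (y : ℂ) ^ (w - β k) * (Real.log y : ℂ) ^ n := by
  set g : ℝ → ℂ := fun y => (y : ℂ) ^ w * (Real.log y : ℂ) ^ n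
  set F : ℕ → ℝ → ℂ := fun k y =>
    ξ k * (A : ℂ) ^ β k * ((y : ℂ) ^ (w - β k) * (Real.log y : ℂ) ^ n)
  have hF : ∀ k, ∀ y ∈ Ioi A, F k y = g y * (ξ k * ((A / y : ℝ) : ℂ) ^ β k) := fun k y hy => by
    have hy : 0 < y := hA.trans hy
    simp only [F, g]
    rw [Complex.ofReal_div, Complex.div_cpow_ofReal_nonneg hA.le hy.le,
      Complex.cpow_sub _ _ (by exact_mod_cast hy.ne')]
    field_simp
  have hF_int : ∀ k, IntegrableOn (F k) (Ioi A) := fun k =>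
    (integrableOn_Ioi_cpow_mul_log_pow hA (by rw [Complex.sub_re]; linarith [hβ k]) n).const_mul _
  have hF_sum : Summable fun k => ∫ y in Ioi A, ‖F k y‖ := by
    refine (hξ.mul_right (∫ y in Ioi A, ‖g y‖)).of_nonneg_of_le
      (fun k => integral_nonneg fun y => norm_nonneg _) fun k => ?_
    rw [← integral_const_mul]
    refine setIntegral_mono_on (hF_int k).norm
      ((integrableOn_Ioi_cpow_mul_log_pow hA hw n).norm.const_mul _) measurableSet_Ioi
      fun y hy => ?_
    rw [hF k y hy, norm_mul, mul_comm]
    exact mul_le_mul_of_nonneg_right (norm_mul_ofReal_div_cpow_le hA (le_of_lt hy) (hβ k) (ξ k))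
      (norm_nonneg _)
  have hsum : ∀ y ∈ Ioi A, g y * ∑' k, ξ k * ((A / y : ℝ) : ℂ) ^ β k = ∑' k, F k y :=
    fun y hy => by rw [← tsum_mul_left]; exact tsum_congr fun k => (hF k y hy).symm
  rw [setIntegral_congr_fun measurableSet_Ioi hsum,
    ← integral_tsum_of_summable_integral_norm hF_int hF_sum]
  exact tsum_congr fun k => integral_const_mul _ _

end TermwiseIntegration

lemma summable_div_pow_sub_natCast {ξ : ℕ → ℂ} (hξ : Summable fun k => ‖ξ k‖) (c : ℂ) (m : ℕ) :
    Summable fun k : ℕ => ξ k / (c - k) ^ m := by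
  refine Summable.of_norm_bounded_eventually_nat hξ ?_
  filter_upwards [eventually_ge_atTop ⌈‖c‖ + 1⌉₊] with k hk
  have hck : 1 ≤ ‖c - k‖ := by
    have hk' : ‖c‖ + 1 ≤ k := Nat.ceil_le.1 hk
    calc (1 : ℝ) ≤ ‖(k : ℂ)‖ - ‖c‖ := by rw [Complex.norm_natCast]; linarith
      _ ≤ ‖c - k‖ := by rw [norm_sub_rev]; exact norm_sub_norm_le _ _
  rw [norm_div, norm_pow]
  exact div_le_self (norm_nonneg _) (one_le_pow₀ hck)

lemma mul_cpow_mul_integral_Ioi_cpow_sub_mul_log_pow {A : ℝ} (hA : 0 < A) {c : ℂ} {d : ℕ}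
    (hd : d ≠ 0) {k : ℕ} (hre : (c / d - k / d).re < -1) (hk : c + d - k ≠ 0) (z : ℂ) (n : ℕ) :
    z * (A : ℂ) ^ ((k : ℂ) / d) * ∫ y in Ioi A, (y : ℂ) ^ (c / d - k / d) * (Real.log y : ℂ) ^ n =
      -(A : ℂ) ^ ((c + d) / d) * ∑ i ∈ Finset.range (n + 1),
        ((-1 : ℂ) ^ (n - i) * ((n.factorial : ℂ) / (i.factorial : ℂ)) * (d : ℂ) ^ (n + 1 - i)) *
          (Real.log A : ℂ) ^ i * (z / (c + d - k) ^ (n + 1 - i)) := by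
  have hd' : (d : ℂ) ≠ 0 := Nat.cast_ne_zero.2 hd
  have hv : c / d - k / d + 1 = (c + d - k) / d := by field_simp; ring
  have hpow : (A : ℂ) ^ ((k : ℂ) / d) * (A : ℂ) ^ ((c + d - k) / d) = (A : ℂ) ^ ((c + d) / d) := by
    rw [← Complex.cpow_add _ _ (by exact_mod_cast hA.ne')]
    congr 1
    field_simp
    ring
  simp only [integral_Ioi_cpow_mul_log_pow hA hre, cpowLogPowPrimitive, logPowCoeff, hv, ← hpow,
    Finset.mul_sum, mul_neg, neg_mul]
  rw [← Finset.sum_neg_distrib]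
  refine Finset.sum_congr rfl fun i _ => ?_
  rw [div_pow]
  field_simp

/-- termwise integration of a normally summable prepared generator on an
unbounded cell, in the everywhere-integrable case `Re(ℓs+η)+d < 0`. -/
theorem stmt10 {X : Type*} (l η : ℂ) (d : ℕ) (hd : 1 ≤ d) (μ : ℕ)
    (a : X → ℝ) (ha : ∀ x, 1 ≤ a x) (ξ : ℕ → X → ℂ)
    (C : ℕ → ℝ) (hC : Summable C) (hb : ∀ k x, ‖ξ k x‖ ≤ C k)
    (s : ℂ) (h1 : (l * s + η).re + d < 0) (h2 : ∀ k : ℕ, l * s + η + d - k ≠ 0) (x : X) :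
    IntegrableOn
      (fun y : ℝ => (y : ℂ) ^ ((l * s + η) / d) * ((Real.log y : ℂ)) ^ μ *
        ∑' k : ℕ, ξ k x * (((a x / y : ℝ)) : ℂ) ^ ((k : ℂ) / d)) (Set.Ioi (a x)) ∧
    (∫ y in Set.Ioi (a x), (y : ℂ) ^ ((l * s + η) / d) * ((Real.log y : ℂ)) ^ μ *
        ∑' k : ℕ, ξ k x * (((a x / y : ℝ)) : ℂ) ^ ((k : ℂ) / d))
      = -((a x : ℂ) ^ ((l * s + η + d) / d)) * ∑ i ∈ Finset.range (μ + 1),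
          ((-1 : ℂ) ^ (μ - i) * ((μ.factorial : ℂ) / (i.factorial : ℂ)) * (d : ℂ) ^ (μ + 1 - i)) *
            ((Real.log (a x) : ℂ)) ^ i *
            ∑' k : ℕ, ξ k x / (l * s + η + d - k) ^ (μ + 1 - i) := by
  have hA : 0 < a x := one_pos.trans_le (ha x)
  have hdpos : (0 : ℝ) < d := by exact_mod_cast hd
  have hξ : Summable fun k => ‖ξ k x‖ := hC.of_nonneg_of_le (fun _ => norm_nonneg _) (hb · x)
  have hw : ((l * s + η) / d).re < -1 := by
    rw [Complex.div_natCast_re, div_lt_iff₀ hdpos]; linarith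
  have hβ : ∀ k : ℕ, 0 ≤ ((k : ℂ) / d).re := fun k => by
    rw [Complex.div_natCast_re, Complex.natCast_re]; positivity
  refine ⟨integrableOn_Ioi_cpow_mul_log_pow_mul_tsum hA hw μ hβ hξ, ?_⟩
  have hre : ∀ k : ℕ, ((l * s + η) / d - k / d).re < -1 := fun k => by
    rw [Complex.sub_re]; linarith [hβ k]
  rw [integral_Ioi_cpow_mul_log_pow_mul_tsum hA hw μ hβ hξ,
    tsum_congr fun k => mul_cpow_mul_integral_Ioi_cpow_sub_mul_log_pow hA (by omega) (hre k) (h2 k)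
      (ξ k x) μ,
    tsum_mul_left,
    Summable.tsum_finsetSum fun i _ => (summable_div_pow_sub_natCast hξ _ _).mul_left _]
  simp_rw [tsum_mul_left]
end

section
/- Let a : X → ℝ with a(x) ≥ 1, d ≥ 1, μ ∈ ℕ, ℓ ∈ ℝ with ℓ ≠ 0, η ∈ ℂ, and let h_k : ℂ × X → ℂ (k ∈ ℕ) be functions. For s ∈ ℂ and x ∈ X let T(s,x,y) = y^{(ℓs+η)/d}(log y)^μ Σ_k h_k(s,x)(a(x)/y)^{k/d}, assuming the series has summable sup-norms in (x,y) for each fixed s. Then y ↦ T(s,x,y) is integrable on (a(x),∞) if and only if h_k(s,x) = 0 for every k ∈ ℕ with Re(ℓs + η) + d − k ≥ 0. -/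
/-!
Substituting `z = (a(x)/y)^(1/d)` turns the series into a power series `∑ hₖ zᵏ` whose
coefficients are bounded by a summable sequence, and `z → 0` as `y → ∞`. Such a series is
`O(zⁿ)` when its first `n` coefficients vanish, and `≍ zⁿ` when `hₙ` is its first nonzero
coefficient. So the integrand is comparable at infinity to `y^((Re(ℓs+η) - n)/d) (log y)^μ`,
which is integrable at infinity exactly when the exponent is `< -1`; on bounded intervals the
integrand is continuous, hence integrable.
-/

open MeasureTheory Asymptotics Filter Set Topology

section PowerSeries

variable {𝕜 : Type*} [NormedField 𝕜] {c : ℕ → 𝕜} {C : ℕ → ℝ}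

theorem norm_mul_pow_le_of_norm_le_one (hcC : ∀ k, ‖c k‖ ≤ C k) (k : ℕ) {z : 𝕜}
    (hz : ‖z‖ ≤ 1) : ‖c k * z ^ k‖ ≤ C k := by
  rw [norm_mul, norm_pow]
  exact (mul_le_of_le_one_right (norm_nonneg _) (pow_le_one₀ (norm_nonneg z) hz)).trans (hcC k)

theorem norm_tsum_mul_pow_le (hC : Summable C) (hcC : ∀ k, ‖c k‖ ≤ C k) {n : ℕ}
    (hc : ∀ k < n, c k = 0) {z : 𝕜} (hz : ‖z‖ ≤ 1) :
    ‖∑' k, c k * z ^ k‖ ≤ (∑' k, C k) * ‖z‖ ^ n := by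
  rw [← tsum_mul_right]
  refine tsum_of_norm_bounded (hC.mul_right _).hasSum fun k => ?_
  rcases lt_or_ge k n with hk | hk
  · simp [hc k hk, mul_nonneg ((norm_nonneg _).trans (hcC k)) (pow_nonneg (norm_nonneg z) n)]
  · rw [norm_mul, norm_pow]
    exact mul_le_mul (hcC k) (pow_le_pow_of_le_one (norm_nonneg z) hz hk) (by positivity)
      ((norm_nonneg _).trans (hcC k))

theorem isBigO_tsum_mul_pow (hC : Summable C) (hcC : ∀ k, ‖c k‖ ≤ C k) {n : ℕ}
    (hc : ∀ k < n, c k = 0) :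
    (fun z => ∑' k, c k * z ^ k) =O[𝓝 0] fun z => z ^ n := by
  refine IsBigO.of_bound (∑' k, C k) ?_
  filter_upwards [Metric.closedBall_mem_nhds (0 : 𝕜) zero_lt_one] with z hz
  rw [norm_pow]
  exact norm_tsum_mul_pow_le hC hcC hc (by simpa using hz)

theorem continuousOn_tsum_mul_pow [CompleteSpace 𝕜] (hC : Summable C)
    (hcC : ∀ k, ‖c k‖ ≤ C k) :
    ContinuousOn (fun z => ∑' k, c k * z ^ k) (Metric.closedBall 0 1) :=
  continuousOn_tsum (fun k => (continuous_const.mul (continuous_pow k)).continuousOn) hC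
    fun k z hz => norm_mul_pow_le_of_norm_le_one hcC k (by simpa using hz)

theorem isBigO_pow_tsum_mul_pow [CompleteSpace 𝕜] (hC : Summable C) (hcC : ∀ k, ‖c k‖ ≤ C k)
    {n : ℕ} (hc : ∀ k < n, c k = 0) (hn : c n ≠ 0) :
    (fun z => z ^ n) =O[𝓝 0] fun z => ∑' k, c k * z ^ k := by
  classical
  set c' : ℕ → 𝕜 := fun k => if k = n then 0 else c k
  have hc'C : ∀ k, ‖c' k‖ ≤ C k := fun k => by
    by_cases hk : k = n
    · simpa [c', hk] using (norm_nonneg _).trans (hcC k)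
    · simpa [c', hk] using hcC k
  have hc' : ∀ k < n + 1, c' k = 0 := fun k hk => by
    rcases (Nat.lt_succ_iff.1 hk).lt_or_eq with hk | hk
    · simp [c', hk.ne, hc k hk]
    · simp [c', hk]
  have hsplit : ∀ᶠ z in 𝓝 (0 : 𝕜),
      ∑' k, c' k * z ^ k + c n * z ^ n = ∑' k, c k * z ^ k := by
    filter_upwards [Metric.closedBall_mem_nhds (0 : 𝕜) zero_lt_one] with z hz
    have hsum : Summable fun k => c k * z ^ k := .of_norm_bounded hC
      fun k => norm_mul_pow_le_of_norm_le_one hcC k (by simpa using hz)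
    rw [hsum.tsum_eq_add_tsum_ite n, add_comm]
    congr 2 with k
    by_cases hk : k = n <;> simp [c', hk]
  have htail : (fun z => ∑' k, c' k * z ^ k) =o[𝓝 0] fun z => c n * z ^ n :=
    ((isBigO_tsum_mul_pow hC hc'C hc').trans_isLittleO
      (isLittleO_pow_pow n.lt_succ_self)).trans_isBigO (isBigO_self_const_mul hn _ _)
  exact (isBigO_self_const_mul hn _ _).trans (htail.right_isBigO_add.congr' .rfl hsplit)

end PowerSeries

theorem integrableAtFilter_rpow_mul_log_pow_atTop_iff {β : ℝ} (μ : ℕ) :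
    IntegrableAtFilter (fun y : ℝ => y ^ β * Real.log y ^ μ) atTop ↔ β < -1 := by
  constructor
  · intro h
    by_contra! hβ
    have hinv : (fun y : ℝ => y ^ (-1 : ℝ)) =O[atTop] fun y => y ^ β * Real.log y ^ μ := by
      refine IsBigO.of_bound 1 ?_
      filter_upwards [eventually_ge_atTop (Real.exp 1)] with y hy
      have hy1 : 1 ≤ y := (Real.one_le_exp zero_le_one).trans hy
      have hlog : 1 ≤ Real.log y := (Real.le_log_iff_exp_le (by positivity)).2 hy
      rw [one_mul, Real.norm_of_nonneg (by positivity), Real.norm_of_nonneg (by positivity)]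
      calc y ^ (-1 : ℝ) ≤ y ^ β := Real.rpow_le_rpow_of_exponent_le hy1 hβ
        _ ≤ y ^ β * Real.log y ^ μ := le_mul_of_one_le_right (by positivity) (one_le_pow₀ hlog)
    have := hinv.integrableAtFilter
      (by fun_prop : Measurable _).stronglyMeasurable.stronglyMeasurableAtFilter h
    exact lt_irrefl _ (integrableAtFilter_rpow_atTop_iff.1 this)
  · intro hβ
    set ε := (-1 - β) / 2
    have hlog : (fun y : ℝ => Real.log y ^ μ) =O[atTop] fun y => y ^ ε := by
      simpa only [Real.rpow_natCast] using (isLittleO_log_rpow_rpow_atTop (μ : ℝ)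
        (by simp only [ε]; linarith)).isBigO
    have hrpow : (fun y : ℝ => y ^ β * y ^ ε) =ᶠ[atTop] fun y => y ^ (β + ε) := by
      filter_upwards [eventually_gt_atTop 0] with y hy
      rw [Real.rpow_add hy]
    exact ((isBigO_refl _ _).mul hlog |>.trans_eventuallyEq hrpow).integrableAtFilter
      (by fun_prop : Measurable _).stronglyMeasurable.stronglyMeasurableAtFilter
      (integrableAtFilter_rpow_atTop_iff.2 (by simp only [ε]; linarith))

section Integrand

variable {A ρ : ℝ}

theorem tendsto_ofReal_div_rpow_atTop (hρ : 0 < ρ) :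
    Tendsto (fun y : ℝ => (((A / y) ^ ρ : ℝ) : ℂ)) atTop (𝓝 0) := by
  have h := ((Real.continuousAt_rpow_const 0 ρ (Or.inr hρ.le)).tendsto.comp
    (tendsto_const_nhds.div_atTop tendsto_id : Tendsto (fun y : ℝ => A / y) atTop (𝓝 0)))
  rw [Real.zero_rpow hρ.ne'] at h
  exact Complex.ofReal_zero ▸ (Complex.continuous_ofReal.tendsto 0).comp h

theorem isTheta_cpow_mul_log_pow_mul_div_rpow_pow (hA : 0 < A) (w : ℂ) (μ n : ℕ) :
    (fun y : ℝ => (y : ℂ) ^ w * (Real.log y : ℂ) ^ μ * (((A / y) ^ ρ : ℝ) : ℂ) ^ n)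
      =Θ[atTop] fun y => y ^ (w.re - n * ρ) * Real.log y ^ μ := by
  rw [← isTheta_const_mul_right (Real.rpow_pos_of_pos hA (ρ * n)).ne']
  refine IsTheta.of_norm_eventuallyEq ?_
  filter_upwards [eventually_ge_atTop 1] with y hy
  have hy0 : 0 < y := zero_lt_one.trans_le hy
  simp only [norm_mul, norm_pow, Complex.norm_cpow_eq_rpow_re_of_pos hy0, Complex.norm_real,
    Real.norm_eq_abs, abs_of_nonneg (Real.log_nonneg hy),
    abs_of_nonneg (Real.rpow_nonneg (div_pos hA hy0).le ρ)]
  rw [← Real.rpow_mul_natCast (div_pos hA hy0).le, Real.div_rpow hA.le hy0.le,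
    Real.rpow_sub hy0, mul_comm (n : ℝ) ρ]
  ring

theorem continuousOn_cpow_mul_log_pow_mul_tsum (hA : 0 < A) (hρ : 0 < ρ) (w : ℂ) (μ : ℕ)
    {c : ℕ → ℂ} {C : ℕ → ℝ} (hC : Summable C) (hcC : ∀ k, ‖c k‖ ≤ C k) :
    ContinuousOn (fun y : ℝ => (y : ℂ) ^ w * (Real.log y : ℂ) ^ μ *
      ∑' k, c k * (((A / y) ^ ρ : ℝ) : ℂ) ^ k) (Ici A) := by
  have hpos : ∀ y ∈ Ici A, 0 < y := fun y hy => hA.trans_le hy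
  have hz : ContinuousOn (fun y : ℝ => (((A / y) ^ ρ : ℝ) : ℂ)) (Ici A) :=
    Complex.continuous_ofReal.comp_continuousOn
      ((continuousOn_const.div continuousOn_id fun y hy => (hpos y hy).ne').rpow_const
        fun _ _ => Or.inr hρ.le)
  have hzball : MapsTo (fun y : ℝ => (((A / y) ^ ρ : ℝ) : ℂ)) (Ici A) (Metric.closedBall 0 1) :=
    fun y hy => by
      have hAy := div_pos hA (hpos y hy)
      simpa [abs_of_pos (Real.rpow_pos_of_pos hAy ρ)] using
        Real.rpow_le_one hAy.le ((div_le_one (hpos y hy)).2 hy) hρ.le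
  refine .mul (.mul ?_ ?_) ((continuousOn_tsum_mul_pow hC hcC).comp hz hzball)
  · exact fun y hy => (Complex.continuousAt_ofReal_cpow_const y w
      (Or.inr (hpos y hy).ne')).continuousWithinAt
  · exact (Complex.continuous_ofReal.comp_continuousOn
      (Real.continuousOn_log.mono fun y hy => (hpos y hy).ne')).pow μ

theorem integrableOn_Ioi_cpow_mul_log_pow_mul_tsum_iff (hA : 0 < A) (hρ : 0 < ρ) (w : ℂ)
    (μ : ℕ) {c : ℕ → ℂ} {C : ℕ → ℝ} (hC : Summable C) (hcC : ∀ k, ‖c k‖ ≤ C k) :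
    IntegrableOn (fun y : ℝ => (y : ℂ) ^ w * (Real.log y : ℂ) ^ μ *
      ∑' k, c k * (((A / y) ^ ρ : ℝ) : ℂ) ^ k) (Ioi A)
    ↔ ∀ k : ℕ, -1 ≤ w.re - k * ρ → c k = 0 := by
  classical
  have hz := tendsto_ofReal_div_rpow_atTop (A := A) hρ
  constructor
  · intro hint
    by_contra! hex
    obtain ⟨k, hk, hck⟩ := hex
    have hex' : ∃ n, c n ≠ 0 := ⟨k, hck⟩
    set n := Nat.find hex'
    have hnk : (n : ℝ) ≤ k := Nat.cast_le.2 (Nat.find_min' hex' hck)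
    have hlower := (isTheta_cpow_mul_log_pow_mul_div_rpow_pow hA w μ n).symm.isBigO.trans
      ((isBigO_refl (fun y : ℝ => (y : ℂ) ^ w * (Real.log y : ℂ) ^ μ) atTop).mul
        ((isBigO_pow_tsum_mul_pow hC hcC (fun j hj => not_not.1 (Nat.find_min hex' hj))
          (Nat.find_spec hex')).comp_tendsto hz))
    have hint' := hlower.integrableAtFilter
      (by fun_prop : Measurable _).stronglyMeasurable.stronglyMeasurableAtFilter
      ⟨Ioi A, Ioi_mem_atTop A, hint⟩
    rw [integrableAtFilter_rpow_mul_log_pow_atTop_iff] at hint'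
    linarith [mul_le_mul_of_nonneg_right hnk hρ.le]
  · intro hvan
    have hex : ∃ n : ℕ, w.re - n * ρ < -1 := by
      obtain ⟨n, hn⟩ := exists_nat_gt ((w.re + 1) / ρ)
      exact ⟨n, by rw [div_lt_iff₀ hρ] at hn; linarith⟩
    have hupper := ((isBigO_refl (fun y : ℝ => (y : ℂ) ^ w * (Real.log y : ℂ) ^ μ) atTop).mul
      ((isBigO_tsum_mul_pow hC hcC (n := Nat.find hex)
        fun j hj => hvan j (not_lt.1 (Nat.find_min hex hj))).comp_tendsto hz)).trans
      (isTheta_cpow_mul_log_pow_mul_div_rpow_pow hA w μ _).isBigO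
    exact ((continuousOn_cpow_mul_log_pow_mul_tsum hA hρ w μ hC hcC).locallyIntegrableOn
      measurableSet_Ici |>.integrableOn_of_isBigO_atTop hupper
        ((integrableAtFilter_rpow_mul_log_pow_atTop_iff μ).2 (Nat.find_spec hex))).mono_set
      Ioi_subset_Ici_self

end Integrand

theorem ofReal_cpow_natCast_div_natCast {t : ℝ} (ht : 0 ≤ t) (k d : ℕ) :
    (t : ℂ) ^ ((k : ℂ) / d) = ((t ^ ((1 : ℝ) / d) : ℝ) : ℂ) ^ k := by
  rw [← Complex.ofReal_pow, ← Real.rpow_mul_natCast ht, Complex.ofReal_cpow ht]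
  push_cast
  ring_nf

theorem stmt17_general {X : Type*} (a : X → ℝ) (ha : ∀ x, 1 ≤ a x) (d : ℕ) (hd : 1 ≤ d) (μ : ℕ)
    (l : ℝ) (η : ℂ) (h : ℕ → ℂ → X → ℂ) (s : ℂ) (x : X)
    (C : ℕ → ℝ) (hC : Summable C) (hbound : ∀ k x', ‖h k s x'‖ ≤ C k) :
    IntegrableOn
      (fun y : ℝ => (y : ℂ) ^ (((l : ℂ) * s + η) / d) * ((Real.log y : ℂ)) ^ μ *
        ∑' k : ℕ, h k s x * (((a x / y : ℝ)) : ℂ) ^ ((k : ℂ) / d)) (Set.Ioi (a x))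
    ↔ ∀ k : ℕ, 0 ≤ ((l : ℂ) * s + η).re + d - k → h k s x = 0 := by
  have hA : 0 < a x := zero_lt_one.trans_le (ha x)
  have hd0 : (0 : ℝ) < d := by exact_mod_cast hd
  have hseries : EqOn
      (fun y : ℝ => (y : ℂ) ^ (((l : ℂ) * s + η) / d) * ((Real.log y : ℂ)) ^ μ *
        ∑' k : ℕ, h k s x * (((a x / y : ℝ)) : ℂ) ^ ((k : ℂ) / d))
      (fun y : ℝ => (y : ℂ) ^ (((l : ℂ) * s + η) / d) * ((Real.log y : ℂ)) ^ μ *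
        ∑' k : ℕ, h k s x * (((a x / y) ^ ((1 : ℝ) / d) : ℝ) : ℂ) ^ k) (Ioi (a x)) :=
    fun y hy => by
      simp only [ofReal_cpow_natCast_div_natCast (div_pos hA (hA.trans hy)).le]
  rw [integrableOn_congr_fun hseries measurableSet_Ioi,
    integrableOn_Ioi_cpow_mul_log_pow_mul_tsum_iff hA (one_div_pos.2 hd0) _ μ hC (hbound · x)]
  refine forall_congr' fun k => imp_congr_left ?_
  rw [Complex.div_natCast_re, mul_one_div, ← sub_div, le_div_iff₀ hd0]
  constructor <;> intro <;> linarith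

/-- a prepared generator with summable sup-norms is integrable on
`(a(x),∞)` iff all the coefficients of the non-integrable terms vanish. -/
theorem stmt17 {X : Type*} (a : X → ℝ) (ha : ∀ x, 1 ≤ a x) (d : ℕ) (hd : 1 ≤ d) (μ : ℕ)
    (l : ℝ) (hl : l ≠ 0) (η : ℂ) (h : ℕ → ℂ → X → ℂ) (s : ℂ) (x : X)
    (C : ℕ → ℝ) (hC : Summable C) (hbound : ∀ k x', ‖h k s x'‖ ≤ C k) :
    IntegrableOn
      (fun y : ℝ => (y : ℂ) ^ (((l : ℂ) * s + η) / d) * ((Real.log y : ℂ)) ^ μ *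
        ∑' k : ℕ, h k s x * (((a x / y : ℝ)) : ℂ) ^ ((k : ℂ) / d)) (Set.Ioi (a x))
    ↔ ∀ k : ℕ, 0 ≤ ((l : ℂ) * s + η).re + d - k → h k s x = 0 :=
  stmt17_general a ha d hd μ l η h s x C hC hbound
end

section
/- Let c₁,…,cₙ ∈ ℂ and σ₁,…,σₙ ∈ ℝ pairwise distinct, with n ≥ 1, and suppose the function E(y) = Σ_{j=1}^n c_j y^{iσ_j} (y > 0) is not constant (equivalently, c_j ≠ 0 and σ_j ≠ 0 for some j). Then there exist δ > 0 and two sequences (y_{1,m}), (y_{2,m}) both tending to +∞ such that |E(y_{1,m}) − E(y_{2,m})| ≥ δ for all m. In particular, E(y) has no limit as y → +∞. -/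
/-!
Write `f t = ∑ j, c j * exp (I σⱼ t)`, so that `E y = f (log y)`. By Dedekind's independence of
characters `f` is not constant, say `f t₁ ≠ f t₂`. By compactness of the torus (Dirichlet's
simultaneous approximation) `f` has arbitrarily large `ε`-almost periods `τ`, i.e.
`‖f (t + τ) - f t‖ ≤ ε` for all `t`. Shifting `t₁` and `t₂` by such `τ`'s gives two sequences
tending to `+∞` along which the values of `f` stay `‖f t₁ - f t₂‖ / 2` apart.
-/

open Complex Filter Topology

theorem IsCompact.exists_add_le_dist_lt {X : Type*} [PseudoMetricSpace X] {s : Set X}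
    (hs : IsCompact s) {u : ℕ → X} (hu : ∀ m, u m ∈ s) {ε : ℝ} (hε : 0 < ε) (N : ℕ) :
    ∃ a b, a + N ≤ b ∧ dist (u b) (u a) < ε := by
  obtain ⟨_, -, φ, hφ, hconv⟩ := hs.tendsto_subseq hu
  obtain ⟨K, hK⟩ := Metric.cauchySeq_iff'.1 hconv.cauchySeq ε hε
  have hKφ : K ≤ φ K := hφ.le_apply
  exact ⟨φ K, φ (φ K + N), hφ.le_apply, hK _ (by omega)⟩

theorem norm_exp_I_mul_ofReal_mul (s t : ℝ) : ‖exp (I * s * t)‖ = 1 := by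
  simp [norm_exp]

theorem exp_I_mul_ofReal_add (s a b : ℝ) :
    exp (I * s * ↑(a + b)) = exp (I * s * a) * exp (I * s * b) := by
  rw [← exp_add]
  push_cast
  ring_nf

theorem exists_ge_forall_norm_exp_I_mul_sub_one_lt {ι : Type*} [Fintype ι] (σ : ι → ℝ)
    {ε : ℝ} (hε : 0 < ε) (N : ℕ) :
    ∃ τ : ℝ, N ≤ τ ∧ ∀ j, ‖exp (I * σ j * τ) - 1‖ < ε := by
  set u : ℕ → ι → ℂ := fun m j => exp (I * σ j * (m : ℝ))
  have hu : ∀ m, u m ∈ Metric.closedBall 0 1 := fun m => by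
    simpa [u, pi_norm_le_iff_of_nonneg] using fun j => (norm_exp_I_mul_ofReal_mul (σ j) m).le
  obtain ⟨a, b, hab, hdist⟩ := (isCompact_closedBall (0 : ι → ℂ) 1).exists_add_le_dist_lt hu hε N
  have hN : (N : ℝ) ≤ (b : ℝ) - a := by
    have : (a : ℝ) + N ≤ b := by exact_mod_cast hab
    linarith
  refine ⟨(b : ℝ) - a, hN, fun j => ?_⟩
  have hshift : exp (I * σ j * (b : ℝ)) - exp (I * σ j * (a : ℝ)) =
      exp (I * σ j * (a : ℝ)) * (exp (I * σ j * ↑((b : ℝ) - a)) - 1) := by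
    rw [mul_sub, mul_one, ← exp_I_mul_ofReal_add, add_sub_cancel]
  calc ‖exp (I * σ j * ↑((b : ℝ) - a)) - 1‖
      = ‖exp (I * σ j * (b : ℝ)) - exp (I * σ j * (a : ℝ))‖ := by
        rw [hshift, norm_mul, norm_exp_I_mul_ofReal_mul, one_mul]
    _ ≤ dist (u b) (u a) := (dist_eq_norm (u b j) (u a j)).symm.trans_le (dist_le_pi_dist _ _ j)
    _ < ε := hdist

section TrigSum

variable {ι : Type*} [Fintype ι]

noncomputable def trigSum (c : ι → ℂ) (σ : ι → ℝ) (t : ℝ) : ℂ :=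
  ∑ j, c j * exp (I * σ j * t)

theorem norm_trigSum_add_sub_le (c : ι → ℂ) (σ : ι → ℝ) {τ ε : ℝ}
    (hτ : ∀ j, ‖exp (I * σ j * τ) - 1‖ ≤ ε) (t : ℝ) :
    ‖trigSum c σ (t + τ) - trigSum c σ t‖ ≤ (∑ j, ‖c j‖) * ε := by
  have hdiff : trigSum c σ (t + τ) - trigSum c σ t =
      ∑ j, c j * exp (I * σ j * t) * (exp (I * σ j * τ) - 1) := by
    simp only [trigSum, ← Finset.sum_sub_distrib, exp_I_mul_ofReal_add]
    exact Finset.sum_congr rfl fun j _ => by ring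
  calc ‖trigSum c σ (t + τ) - trigSum c σ t‖
      ≤ ∑ j, ‖c j * exp (I * σ j * t) * (exp (I * σ j * τ) - 1)‖ := hdiff ▸ norm_sum_le _ _
    _ ≤ ∑ j, ‖c j‖ * ε := Finset.sum_le_sum fun j _ => by
        rw [norm_mul, norm_mul, norm_exp_I_mul_ofReal_mul, mul_one]
        exact mul_le_mul_of_nonneg_left (hτ j) (norm_nonneg _)
    _ = (∑ j, ‖c j‖) * ε := (Finset.sum_mul ..).symm

theorem exists_ge_forall_norm_trigSum_add_sub_le (c : ι → ℂ) (σ : ι → ℝ) {ε : ℝ} (hε : 0 < ε)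
    (N : ℕ) : ∃ τ ≥ (N : ℝ), ∀ t, ‖trigSum c σ (t + τ) - trigSum c σ t‖ ≤ ε := by
  set C := ∑ j, ‖c j‖
  have hC : 0 ≤ C := Finset.sum_nonneg fun j _ => norm_nonneg _
  obtain ⟨τ, hτN, hτ⟩ :=
    exists_ge_forall_norm_exp_I_mul_sub_one_lt σ (div_pos hε (by linarith : 0 < C + 1)) N
  refine ⟨τ, hτN, fun t => (norm_trigSum_add_sub_le c σ (fun j => (hτ j).le) t).trans ?_⟩
  calc C * (ε / (C + 1)) ≤ (C + 1) * (ε / (C + 1)) := by gcongr; linarith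
    _ = ε := mul_div_cancel₀ ε (by linarith)

noncomputable def expChar (s : ℝ) : Multiplicative ℝ →* ℂ where
  toFun t := exp (I * s * (t.toAdd : ℝ))
  map_one' := by simp
  map_mul' x y := by simp [mul_add, exp_add]

theorem expChar_injective : Function.Injective expChar := by
  intro s s' h
  by_contra hne
  have hsub : (s - s' : ℂ) ≠ 0 := by exact_mod_cast sub_ne_zero.2 hne
  -- at `t = π / (s - s')` the two characters differ by the factor `exp (π I) = -1`
  have hpi : I * s * ↑(Real.pi / (s - s')) = I * s' * ↑(Real.pi / (s - s')) + Real.pi * I := by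
    push_cast
    field_simp
    ring
  have ht := DFunLike.congr_fun h (Multiplicative.ofAdd (Real.pi / (s - s')))
  simp only [expChar, MonoidHom.coe_mk, OneHom.coe_mk, toAdd_ofAdd, hpi, exp_add,
    exp_pi_mul_I] at ht
  exact exp_ne_zero _ (by linear_combination -ht / 2)

theorem linearIndependent_exp_I_mul :
    LinearIndependent ℂ (fun (s t : ℝ) => exp (I * s * t)) :=
  (linearIndependent_monoidHom (Multiplicative ℝ) ℂ).comp expChar expChar_injective

theorem coeff_eq_zero_of_forall_trigSum_eq {c : ι → ℂ} {σ : ι → ℝ} (hσ : Function.Injective σ)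
    {C : ℂ} (hconst : ∀ t, trigSum c σ t = C) {j₀ : ι} (hj₀ : σ j₀ ≠ 0) : c j₀ = 0 := by
  classical
  set l : ℝ →₀ ℂ := ∑ j, Finsupp.single (σ j) (c j) - Finsupp.single 0 C
  have hl : l = 0 := by
    refine linearIndependent_iff.1 linearIndependent_exp_I_mul l ?_
    ext t
    simpa [l, trigSum, map_sum, Finsupp.linearCombination_single, sub_eq_zero] using hconst t
  simpa [l, Finsupp.single_apply, hσ.eq_iff, Ne.symm hj₀] using DFunLike.congr_fun hl (σ j₀)

end TrigSum

theorem exists_tendsto_atTop_le_norm_sub_of_almost_periods {E : Type*} [NormedAddCommGroup E]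
    {f : ℝ → E} (hf : ∀ ε > 0, ∀ N : ℕ, ∃ τ ≥ (N : ℝ), ∀ t, ‖f (t + τ) - f t‖ ≤ ε) {t₁ t₂ : ℝ}
    (hne : f t₁ ≠ f t₂) :
    ∃ δ > 0, ∃ s₁ s₂ : ℕ → ℝ, Tendsto s₁ atTop atTop ∧ Tendsto s₂ atTop atTop ∧
      ∀ m, δ ≤ ‖f (s₁ m) - f (s₂ m)‖ := by
  set D := ‖f t₁ - f t₂‖
  have hD : 0 < D := norm_pos_iff.2 (sub_ne_zero.2 hne)
  choose τ hτN hτ using hf (D / 4) (by positivity)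
  have hτ_tendsto : Tendsto τ atTop atTop := tendsto_atTop_mono hτN tendsto_natCast_atTop_atTop
  refine ⟨D / 2, by positivity, (t₁ + τ ·), (t₂ + τ ·),
    tendsto_atTop_add_const_left _ _ hτ_tendsto, tendsto_atTop_add_const_left _ _ hτ_tendsto,
    fun m => ?_⟩
  have htri : D ≤ ‖f (t₁ + τ m) - f t₁‖ + ‖f (t₁ + τ m) - f (t₂ + τ m)‖ +
      ‖f (t₂ + τ m) - f t₂‖ :=
    calc D ≤ ‖f t₁ - f (t₁ + τ m)‖ + ‖f (t₁ + τ m) - f t₂‖ := norm_sub_le_norm_sub_add_norm_sub ..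
      _ ≤ ‖f t₁ - f (t₁ + τ m)‖ + (‖f (t₁ + τ m) - f (t₂ + τ m)‖ + ‖f (t₂ + τ m) - f t₂‖) := by
        gcongr
        exact norm_sub_le_norm_sub_add_norm_sub ..
      _ = _ := by rw [norm_sub_rev (f t₁)]; ring
  linarith [hτ m t₁, hτ m t₂]

theorem not_tendsto_nhds_of_le_dist {α X : Type*} [PseudoMetricSpace X] {g : α → X}
    {l : Filter α} {y₁ y₂ : ℕ → α} (hy₁ : Tendsto y₁ atTop l) (hy₂ : Tendsto y₂ atTop l)
    {δ : ℝ} (hδ : 0 < δ) (hsep : ∀ m, δ ≤ dist (g (y₁ m)) (g (y₂ m))) (L : X) :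
    ¬ Tendsto g l (𝓝 L) := by
  intro hL
  have hdist := (hL.comp hy₁).dist (hL.comp hy₂)
  rw [dist_self] at hdist
  obtain ⟨m, hm⟩ := (hdist.eventually (eventually_lt_nhds hδ)).exists
  exact (hsep m).not_gt hm

theorem stmt18_general (n : ℕ) (c : Fin n → ℂ) (σ : Fin n → ℝ)
    (hσ : Function.Injective σ) (hex : ∃ j, c j ≠ 0 ∧ σ j ≠ 0) :
    (∃ δ > (0 : ℝ), ∃ y₁ y₂ : ℕ → ℝ,
      Filter.Tendsto y₁ Filter.atTop Filter.atTop ∧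
      Filter.Tendsto y₂ Filter.atTop Filter.atTop ∧
      ∀ m, δ ≤ ‖(∑ j, c j * Complex.exp (Complex.I * (σ j : ℂ) * (Real.log (y₁ m) : ℂ))) -
        (∑ j, c j * Complex.exp (Complex.I * (σ j : ℂ) * (Real.log (y₂ m) : ℂ)))‖) ∧
    ∀ L : ℂ, ¬ Filter.Tendsto
      (fun y : ℝ => ∑ j, c j * Complex.exp (Complex.I * (σ j : ℂ) * (Real.log y : ℂ)))
      Filter.atTop (nhds L) := by
  obtain ⟨t, ht⟩ : ∃ t, trigSum c σ t ≠ trigSum c σ 0 := by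
    by_contra! hconst
    obtain ⟨j, hcj, hσj⟩ := hex
    exact hcj (coeff_eq_zero_of_forall_trigSum_eq hσ hconst hσj)
  obtain ⟨δ, hδ, s₁, s₂, hs₁, hs₂, hsep⟩ := exists_tendsto_atTop_le_norm_sub_of_almost_periods
    (fun ε hε N => exists_ge_forall_norm_trigSum_add_sub_le c σ hε N) ht
  have hosc : ∃ δ > (0 : ℝ), ∃ y₁ y₂ : ℕ → ℝ, Tendsto y₁ atTop atTop ∧ Tendsto y₂ atTop atTop ∧
      ∀ m, δ ≤ ‖trigSum c σ (Real.log (y₁ m)) - trigSum c σ (Real.log (y₂ m))‖ :=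
    ⟨δ, hδ, (Real.exp <| s₁ ·), (Real.exp <| s₂ ·), Real.tendsto_exp_atTop.comp hs₁,
      Real.tendsto_exp_atTop.comp hs₂, by simpa only [Real.log_exp] using hsep⟩
  refine ⟨hosc, fun L => ?_⟩
  obtain ⟨δ, hδ, y₁, y₂, hy₁, hy₂, hsep⟩ := hosc
  exact not_tendsto_nhds_of_le_dist (g := fun y => trigSum c σ (Real.log y)) hy₁ hy₂ hδ
    (by simpa only [dist_eq_norm] using hsep) L

/-- a non-constant finite sum of imaginary powers oscillates: its values
along two sequences tending to `+∞` stay `δ`-apart, and it has no limit at `+∞`. -/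
theorem stmt18 (n : ℕ) (hn : 1 ≤ n) (c : Fin n → ℂ) (σ : Fin n → ℝ)
    (hσ : Function.Injective σ) (hex : ∃ j, c j ≠ 0 ∧ σ j ≠ 0) :
    (∃ δ > (0 : ℝ), ∃ y₁ y₂ : ℕ → ℝ,
      Filter.Tendsto y₁ Filter.atTop Filter.atTop ∧
      Filter.Tendsto y₂ Filter.atTop Filter.atTop ∧
      ∀ m, δ ≤ ‖(∑ j, c j * Complex.exp (Complex.I * (σ j : ℂ) * (Real.log (y₁ m) : ℂ))) -
        (∑ j, c j * Complex.exp (Complex.I * (σ j : ℂ) * (Real.log (y₂ m) : ℂ)))‖) ∧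
    ∀ L : ℂ, ¬ Filter.Tendsto
      (fun y : ℝ => ∑ j, c j * Complex.exp (Complex.I * (σ j : ℂ) * (Real.log y : ℂ)))
      Filter.atTop (nhds L) :=
  stmt18_general n c σ hσ hex
end
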